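/- arXiv:2001.11676 — 7 statements merged into one kernel-verified Lean document; each statement's English description precedes it below -/
import Mathlib

section
/- Let S ⊆ ℤⁿ be a DDM-convex set, let x, y ∈ S with ‖y − x‖_∞ = m, and let J ⊆ {1, 2, …, m}. With A_k = {i : y_i − x_i ≥ k} and B_k = {i : y_i − x_i ≤ −k} for k = 1,…,m, and d = Σ_{k∈J} (1_{A_k} − 1_{B_k}), we have x + d ∈ S and y − d ∈ S. -/
open Finset

/-- Directed midpoint `μ(x,y)`: round `(xᵢ+yᵢ)/2` towards `xᵢ`, componentwise:
`μ(x,y)ᵢ = ⌈(xᵢ+yᵢ)/2⌉` if `xᵢ ≥ yᵢ`, and `μ(x,y)ᵢ = ⌊(xᵢ+yᵢ)/2⌋` if `xᵢ < yᵢ`. -/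
def dmu {n : ℕ} (x y : Fin n → ℤ) : Fin n → ℤ := fun i =>
  if y i ≤ x i then ⌈((x i + y i : ℤ) : ℚ) / 2⌉ else ⌊((x i + y i : ℤ) : ℚ) / 2⌋

/-- The ℓ∞-norm of an integer vector, as a natural number. -/
def normInf {n : ℕ} (z : Fin n → ℤ) : ℕ := Finset.univ.sup fun i => (z i).natAbs

/-- A set `S ⊆ ℤⁿ` is DDM-convex if `x, y ∈ S` implies `μ(x,y), μ(y,x) ∈ S`. -/
def DDMConvexSet {n : ℕ} (S : Set (Fin n → ℤ)) : Prop :=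
  ∀ x ∈ S, ∀ y ∈ S, dmu x y ∈ S ∧ dmu y x ∈ S

/-- The vector `1_{A_k} - 1_{B_k}` associated with the pair `(x, y)`, where
`A_k = {i : yᵢ - xᵢ ≥ k}` and `B_k = {i : yᵢ - xᵢ ≤ -k}`. -/
def chi {n : ℕ} (x y : Fin n → ℤ) (k : ℕ) : Fin n → ℤ := fun i =>
  (if (k : ℤ) ≤ y i - x i then 1 else 0) - (if y i - x i ≤ -(k : ℤ) then 1 else 0)

lemma dmu_spec {n : ℕ} (x y : Fin n → ℤ) (i : Fin n) :
    (y i ≤ x i ∧ x i + y i ≤ 2 * dmu x y i ∧ 2 * dmu x y i ≤ x i + y i + 1) ∨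
    (x i < y i ∧ x i + y i - 1 ≤ 2 * dmu x y i ∧ 2 * dmu x y i ≤ x i + y i) := by
  unfold dmu
  set a : ℤ := x i + y i with ha
  split_ifs with h
  · left
    refine ⟨h, ?_, ?_⟩
    · have := Int.le_ceil ((a:ℚ)/2)
      have h2 : (a:ℚ) ≤ 2 * (⌈(a:ℚ)/2⌉:ℚ) := by linarith
      exact_mod_cast h2
    · have := Int.ceil_lt_add_one ((a:ℚ)/2)
      have h2 : 2*(⌈(a:ℚ)/2⌉:ℚ) < (a:ℚ) + 2 := by linarith
      have h3 : 2*⌈(a:ℚ)/2⌉ < a + 2 := by exact_mod_cast h2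
      omega
  · right
    refine ⟨by omega, ?_, ?_⟩
    · have := Int.sub_one_lt_floor ((a:ℚ)/2)
      have h2 : (a:ℚ) - 2 < 2*(⌊(a:ℚ)/2⌋:ℚ) := by linarith
      have h3 : a - 2 < 2*⌊(a:ℚ)/2⌋ := by exact_mod_cast h2
      omega
    · have := Int.floor_le ((a:ℚ)/2)
      have h2 : 2*(⌊(a:ℚ)/2⌋:ℚ) ≤ (a:ℚ) := by linarith
      exact_mod_cast h2

lemma chi_shift {n : ℕ} (x y v : Fin n → ℤ) (k : ℕ) : chi (x + v) (y + v) k = chi x y k := by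
  funext i
  simp only [chi, Pi.add_apply, add_sub_add_right_eq_sub]

lemma chi_shift' {n : ℕ} (x y v : Fin n → ℤ) (k : ℕ) : chi (x - v) (y - v) k = chi x y k := by
  funext i
  simp only [chi, Pi.sub_apply, sub_sub_sub_cancel_right]

lemma chi_dmu_left {n : ℕ} (x y : Fin n → ℤ) (j : ℕ) (hj : 1 ≤ j) :
    chi x (dmu x y) j = chi x y (2*j) := by
  funext i
  have h := dmu_spec x y i
  simp only [chi]
  split_ifs <;> omega

lemma chi_dmu_right {n : ℕ} (x y : Fin n → ℤ) (j : ℕ) (hj : 1 ≤ j) :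
    chi (dmu x y) y j = chi x y (2*j-1) := by
  funext i
  have h := dmu_spec x y i
  simp only [chi]
  split_ifs <;> omega

lemma chi_dmu_left' {n : ℕ} (x y : Fin n → ℤ) (j : ℕ) (hj : 1 ≤ j) :
    chi x (dmu y x) j = chi x y (2*j-1) := by
  funext i
  have h := dmu_spec y x i
  simp only [chi]
  split_ifs <;> omega

lemma chi_dmu_right' {n : ℕ} (x y : Fin n → ℤ) (j : ℕ) (hj : 1 ≤ j) :
    chi (dmu y x) y j = chi x y (2*j) := by
  funext i
  have h := dmu_spec y x i
  simp only [chi]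
  split_ifs <;> omega

lemma normInf_le_iff {n : ℕ} (z : Fin n → ℤ) (m : ℕ) :
    normInf z ≤ m ↔ ∀ i, (z i).natAbs ≤ m := by
  simp [normInf, Finset.sup_le_iff]


lemma normInf_dmu_sub_left {n : ℕ} (x y : Fin n → ℤ) (m : ℕ) (h : normInf (y - x) ≤ m) :
    normInf (dmu x y - x) ≤ m / 2 := by
  rw [normInf_le_iff]
  intro i
  have h1 := (normInf_le_iff _ _).mp h i
  have h2 := dmu_spec x y i
  simp only [Pi.sub_apply] at h1 ⊢
  omega

lemma normInf_sub_dmu_right {n : ℕ} (x y : Fin n → ℤ) (m : ℕ) (h : normInf (y - x) ≤ m) :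
    normInf (y - dmu x y) ≤ (m+1) / 2 := by
  rw [normInf_le_iff]
  intro i
  have h1 := (normInf_le_iff _ _).mp h i
  have h2 := dmu_spec x y i
  simp only [Pi.sub_apply] at h1 ⊢
  omega

lemma normInf_dmu_sub_left' {n : ℕ} (x y : Fin n → ℤ) (m : ℕ) (h : normInf (y - x) ≤ m) :
    normInf (dmu y x - x) ≤ (m+1) / 2 := by
  rw [normInf_le_iff]
  intro i
  have h1 := (normInf_le_iff _ _).mp h i
  have h2 := dmu_spec y x i
  simp only [Pi.sub_apply] at h1 ⊢
  omega

lemma normInf_sub_dmu_right' {n : ℕ} (x y : Fin n → ℤ) (m : ℕ) (h : normInf (y - x) ≤ m) :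
    normInf (y - dmu y x) ≤ m / 2 := by
  rw [normInf_le_iff]
  intro i
  have h1 := (normInf_le_iff _ _).mp h i
  have h2 := dmu_spec y x i
  simp only [Pi.sub_apply] at h1 ⊢
  omega


lemma parallelogram_aux {n : ℕ} (S : Set (Fin n → ℤ)) (hS : DDMConvexSet S) :
    ∀ m : ℕ, ∀ x y : Fin n → ℤ, x ∈ S → y ∈ S → normInf (y - x) ≤ m →
      ∀ J : Finset ℕ, J ⊆ Finset.Icc 1 m →
      x + (∑ k ∈ J, chi x y k) ∈ S ∧ y - (∑ k ∈ J, chi x y k) ∈ S := by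
  intro m
  induction m using Nat.strong_induction_on with
  | _ m IH =>
  intro x y hx hy hxy J hJ
  rcases Nat.lt_or_ge m 2 with hm2 | hm2
  · -- base cases m = 0, 1
    interval_cases m
    · have hJe : J = ∅ := by
        rw [← Finset.subset_empty]
        simpa using hJ
      subst hJe
      simpa using ⟨hx, hy⟩
    · rcases Finset.subset_singleton_iff.mp (by simpa using hJ) with rfl | rfl
      · simpa using ⟨hx, hy⟩
      · have hc : chi x y 1 = y - x := by
          funext i
          have h1 := (normInf_le_iff _ _).mp hxy i
          simp only [Pi.sub_apply] at h1 ⊢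
          simp only [chi]
          split_ifs <;> omega
        rw [Finset.sum_singleton, hc]
        have e1 : x + (y - x) = y := by ring
        have e2 : y - (y - x) = x := by ring
        rw [e1, e2]
        exact ⟨hy, hx⟩
  · -- inductive step
    set z := dmu x y with hzdef
    set w := dmu y x with hwdef
    obtain ⟨hz, hw⟩ := hS x hx y hy
    set J1 : Finset ℕ := (J.filter (fun k => Odd k)).image (fun k => (k+1)/2) with hJ1def
    set J2 : Finset ℕ := (J.filter (fun k => ¬ Odd k)).image (fun k => k/2) with hJ2def
    have hJ1sub : J1 ⊆ Finset.Icc 1 ((m+1)/2) := by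
      intro j hj
      obtain ⟨k, hk, rfl⟩ := Finset.mem_image.mp hj
      have hkJ := Finset.mem_Icc.mp (hJ (Finset.mem_filter.mp hk).1)
      exact Finset.mem_Icc.mpr (by omega)
    have hJ2sub : J2 ⊆ Finset.Icc 1 (m/2) := by
      intro j hj
      obtain ⟨k, hk, rfl⟩ := Finset.mem_image.mp hj
      obtain ⟨hkJ', hko⟩ := Finset.mem_filter.mp hk
      have hkJ := Finset.mem_Icc.mp (hJ hkJ')
      rw [Nat.not_odd_iff] at hko
      exact Finset.mem_Icc.mpr (by omega)
    set dOdd : Fin n → ℤ := ∑ j ∈ J1, chi x y (2*j-1) with hdOdd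
    set dEven : Fin n → ℤ := ∑ j ∈ J2, chi x y (2*j) with hdEven
    have hsplit : (∑ k ∈ J, chi x y k) = dOdd + dEven := by
      rw [hdOdd, hdEven, ← Finset.sum_filter_add_sum_filter_not J (fun k => Odd k)]
      congr 1
      · rw [hJ1def, Finset.sum_image]
        · apply Finset.sum_congr rfl
          intro k hk
          have hko := (Finset.mem_filter.mp hk).2
          rw [Nat.odd_iff] at hko
          have hk2 : 2*((k+1)/2)-1 = k := by omega
          rw [hk2]
        · intro a ha b hb hab
          have hao := (Finset.mem_filter.mp ha).2
          have hbo := (Finset.mem_filter.mp hb).2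
          rw [Nat.odd_iff] at hao hbo
          have hab' : (a+1)/2 = (b+1)/2 := hab
          omega
      · rw [hJ2def, Finset.sum_image]
        · apply Finset.sum_congr rfl
          intro k hk
          have hko := (Finset.mem_filter.mp hk).2
          rw [Nat.not_odd_iff] at hko
          have hk2 : 2*(k/2) = k := by omega
          rw [hk2]
        · intro a ha b hb hab
          have hao := (Finset.mem_filter.mp ha).2
          have hbo := (Finset.mem_filter.mp hb).2
          rw [Nat.not_odd_iff] at hao hbo
          have hab' : a/2 = b/2 := hab
          omega
    have hj1one : ∀ j ∈ J1, 1 ≤ j := fun j hj => (Finset.mem_Icc.mp (hJ1sub hj)).1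
    have hj2one : ∀ j ∈ J2, 1 ≤ j := fun j hj => (Finset.mem_Icc.mp (hJ2sub hj)).1
    -- IH on (z, y) with J1
    have ih1 := IH ((m+1)/2) (by omega) z y hz hy (normInf_sub_dmu_right x y m hxy) J1 hJ1sub
    have hzy : (∑ j ∈ J1, chi z y j) = dOdd := by
      rw [hdOdd]; exact Finset.sum_congr rfl (fun j hj => chi_dmu_right x y j (hj1one j hj))
    rw [hzy] at ih1
    -- IH on (x, w) with J1
    have ih2 := IH ((m+1)/2) (by omega) x w hx hw (normInf_dmu_sub_left' x y m hxy) J1 hJ1sub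
    have hxw : (∑ j ∈ J1, chi x w j) = dOdd := by
      rw [hdOdd]; exact Finset.sum_congr rfl (fun j hj => chi_dmu_left' x y j (hj1one j hj))
    rw [hxw] at ih2
    constructor
    · -- x + (dOdd + dEven) ∈ S, via pair (x + dOdd, z + dOdd)
      have hnorm : normInf ((z + dOdd) - (x + dOdd)) ≤ m/2 := by
        have e : (z + dOdd) - (x + dOdd) = z - x := by ring
        rw [e]
        exact normInf_dmu_sub_left x y m hxy
      have ih3 := IH (m/2) (by omega) (x + dOdd) (z + dOdd) ih2.1 ih1.1 hnorm J2 hJ2sub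
      have hchi : (∑ j ∈ J2, chi (x + dOdd) (z + dOdd) j) = dEven := by
        rw [hdEven]
        exact Finset.sum_congr rfl (fun j hj => by
          rw [chi_shift, chi_dmu_left x y j (hj2one j hj)])
      rw [hchi] at ih3
      have e : x + dOdd + dEven = x + (∑ k ∈ J, chi x y k) := by rw [hsplit]; ring
      rw [← e]
      exact ih3.1
    · -- y - (dOdd + dEven) ∈ S, via pair (w - dOdd, y - dOdd)
      have hnorm : normInf ((y - dOdd) - (w - dOdd)) ≤ m/2 := by
        have e : (y - dOdd) - (w - dOdd) = y - w := by ring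
        rw [e]
        exact normInf_sub_dmu_right' x y m hxy
      have ih3 := IH (m/2) (by omega) (w - dOdd) (y - dOdd) ih2.2 ih1.2 hnorm J2 hJ2sub
      have hchi : (∑ j ∈ J2, chi (w - dOdd) (y - dOdd) j) = dEven := by
        rw [hdEven]
        exact Finset.sum_congr rfl (fun j hj => by
          rw [chi_shift', chi_dmu_right' x y j (hj2one j hj)])
      rw [hchi] at ih3
      have e : y - dOdd - dEven = y - (∑ k ∈ J, chi x y k) := by rw [hsplit]; ring
      rw [← e]
      exact ih3.2


/-- Parallelogram property of DDM-convex sets: for `x, y ∈ S` with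
`‖y - x‖_∞ = m` and any `J ⊆ {1, …, m}`, putting
`d = Σ_{k ∈ J} (1_{A_k} - 1_{B_k})`, both `x + d ∈ S` and `y - d ∈ S`. -/
theorem ddmConvexSet_parallelogram {n : ℕ} (S : Set (Fin n → ℤ))
    (hS : DDMConvexSet S) (x y : Fin n → ℤ) (hx : x ∈ S) (hy : y ∈ S)
    (m : ℕ) (hm : normInf (y - x) = m) (J : Finset ℕ) (hJ : J ⊆ Finset.Icc 1 m) :
    x + (∑ k ∈ J, chi x y k) ∈ S ∧ y - (∑ k ∈ J, chi x y k) ∈ S := by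
  exact parallelogram_aux S hS m x y hx hy (le_of_eq hm) J hJ
end

section
/- Let {d^k ∈ {−1, 0, 1}ⁿ \ {0} : k = 1, …, m} be a multiset of vectors such that for each coordinate i ∈ {1,…,n}, either 1 ≥ d^1_i ≥ d^2_i ≥ ⋯ ≥ d^m_i ≥ 0 or −1 ≤ d^1_i ≤ d^2_i ≤ ⋯ ≤ d^m_i ≤ 0. Then D(Σ_{k=1}^m d^k) equals the multiset {d^k : k = 1, …, m}. -/
open Finset

lemma floorHalf_eq (t : ℤ) : ⌊(t : ℚ) / 2⌋ = t / 2 := by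
  have := Rat.floor_intCast_div_natCast t 2
  push_cast at this
  exact this

lemma ceilHalf_eq (t : ℤ) : ⌈(t : ℚ) / 2⌉ = (t + 1) / 2 := by
  have h : ⌈(t : ℚ) / 2⌉ = -⌊((-t : ℤ) : ℚ) / 2⌋ := by
    rw [← Int.ceil_neg]; push_cast; ring_nf
  have h2 := Rat.floor_intCast_div_natCast (-t) 2
  push_cast at h h2 ⊢
  rw [h, h2]
  omega

lemma dmu_zero_right {n : ℕ} (x : Fin n → ℤ) (i : Fin n) :
    dmu x 0 i = if 0 ≤ x i then (x i + 1) / 2 else x i / 2 := by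
  simp only [dmu, Pi.zero_apply, add_zero, Int.cast_zero]
  by_cases h : 0 ≤ x i <;> simp [h, floorHalf_eq, ceilHalf_eq, not_le.mp]

lemma dmu_zero_left {n : ℕ} (x : Fin n → ℤ) (i : Fin n) :
    dmu 0 x i = if x i ≤ 0 then (x i + 1) / 2 else x i / 2 := by
  simp only [dmu, Pi.zero_apply, zero_add, Int.cast_zero]
  by_cases h : x i ≤ 0 <;> simp [h, floorHalf_eq, ceilHalf_eq]

lemma natAbs_le_normInf {n : ℕ} (z : Fin n → ℤ) (i : Fin n) :
    (z i).natAbs ≤ normInf z :=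
  Finset.le_sup (f := fun i => (z i).natAbs) (Finset.mem_univ i)

lemma normInf_lt_of {n : ℕ} {z : Fin n → ℤ} {m : ℕ} (hm : 0 < m)
    (h : ∀ i, (z i).natAbs < m) : normInf z < m :=
  (Finset.sup_lt_iff (f := fun i => (z i).natAbs) hm).2 fun i _ => h i

lemma normInf_dmu_zero_right_lt {n : ℕ} {x : Fin n → ℤ} (h : 2 ≤ normInf x) :
    normInf (dmu x 0) < normInf x := by
  refine normInf_lt_of (by omega) fun i => ?_
  have h1 := natAbs_le_normInf x i
  rw [dmu_zero_right]
  by_cases h0 : 0 ≤ x i <;> simp [h0] <;> omega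

lemma normInf_dmu_zero_left_lt {n : ℕ} {x : Fin n → ℤ} (h : 2 ≤ normInf x) :
    normInf (dmu 0 x) < normInf x := by
  refine normInf_lt_of (by omega) fun i => ?_
  have h1 := natAbs_le_normInf x i
  rw [dmu_zero_left]
  by_cases h0 : x i ≤ 0 <;> simp [h0] <;> omega

lemma normInf_pos {n : ℕ} {x : Fin n → ℤ} (h : x ≠ 0) : 1 ≤ normInf x := by
  by_contra hc
  push_neg at hc
  apply h
  funext i
  have := natAbs_le_normInf x i
  simp only [Pi.zero_apply]
  omega

/-- The multiset `D(x)`: `D(0) = ∅`; `D(x) = {x}` if `‖x‖_∞ = 1`;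
`D(x) = {μ(x,0), μ(0,x)}` if `‖x‖_∞ = 2`; and
`D(x) = D(μ(x,0)) ∪ D(μ(0,x))` (multiset union) if `‖x‖_∞ ≥ 3`. -/
def Dmultiset {n : ℕ} (x : Fin n → ℤ) : Multiset (Fin n → ℤ) :=
  if x = 0 then 0
  else if normInf x = 1 then {x}
  else if normInf x = 2 then {dmu x 0, dmu 0 x}
  else Dmultiset (dmu x 0) + Dmultiset (dmu 0 x)
termination_by normInf x
decreasing_by
  · exact normInf_dmu_zero_right_lt (by have := normInf_pos ‹x ≠ 0›; omega)
  · exact normInf_dmu_zero_left_lt (by have := normInf_pos ‹x ≠ 0›; omega)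

lemma sum_ite_lt (s : ℤ) (t : ℕ) (M : ℕ) :
    ∑ j ∈ Finset.range M, (if j < t then s else 0) = s * ((min t M : ℕ) : ℤ) := by
  induction M with
  | zero => simp
  | succ M ih =>
    rw [Finset.sum_range_succ, ih]
    by_cases h : M < t
    · rw [if_pos h]
      have : min t (M+1) = min t M + 1 := by omega
      rw [this]; push_cast; ring
    · rw [if_neg h]
      have : min t (M+1) = min t M := by omega
      rw [this]; ring

def evenEmb (m : ℕ) (j : Fin ((m+1)/2)) : Fin m := ⟨2*j, by omega⟩
def oddEmb (m : ℕ) (j : Fin (m/2)) : Fin m := ⟨2*j+1, by omega⟩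

lemma evenEmb_inj (m : ℕ) : Function.Injective (evenEmb m) := by
  intro a b h
  have := Fin.val_eq_of_eq h
  simp [evenEmb] at this
  exact Fin.ext (by omega)

lemma oddEmb_inj (m : ℕ) : Function.Injective (oddEmb m) := by
  intro a b h
  have := Fin.val_eq_of_eq h
  simp [oddEmb] at this
  exact Fin.ext (by omega)

lemma univ_split (m : ℕ) :
    (Finset.univ.val : Multiset (Fin m)) =
      Multiset.map (evenEmb m) Finset.univ.val + Multiset.map (oddEmb m) Finset.univ.val := by
  classical
  set A : Finset (Fin m) := Finset.univ.map ⟨evenEmb m, evenEmb_inj m⟩ with hA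
  set B : Finset (Fin m) := Finset.univ.map ⟨oddEmb m, oddEmb_inj m⟩ with hB
  have hdis : Disjoint A B := by
    rw [Finset.disjoint_left]
    rintro a ha hb
    simp [hA, hB, Finset.mem_map, evenEmb, oddEmb] at ha hb
    obtain ⟨j, hj⟩ := ha
    obtain ⟨l, hl⟩ := hb
    have hj' : 2*(j:ℕ) = (a:ℕ) := by rw [← hj]
    have hl' : 2*(l:ℕ)+1 = (a:ℕ) := by rw [← hl]
    omega
  have hun : A.disjUnion B hdis = Finset.univ := by
    apply Finset.eq_univ_of_forall
    intro k
    rw [Finset.mem_disjUnion]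
    by_cases h : (k:ℕ) % 2 = 0
    · left
      simp only [hA, Finset.mem_map, Finset.mem_univ, true_and]
      exact ⟨⟨(k:ℕ)/2, by omega⟩, by apply Fin.ext; simp [evenEmb]; omega⟩
    · right
      simp only [hB, Finset.mem_map, Finset.mem_univ, true_and]
      exact ⟨⟨(k:ℕ)/2, by omega⟩, by apply Fin.ext; simp [oddEmb]; omega⟩
  calc (Finset.univ.val : Multiset (Fin m)) = (A.disjUnion B hdis).val := by rw [hun]
    _ = A.val + B.val := rfl
    _ = _ := by rw [hA, hB, Finset.map_val, Finset.map_val]; rfl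

lemma exists_step {n m : ℕ} (d : Fin m → Fin n → ℤ)
    (hval : ∀ k i, d k i = -1 ∨ d k i = 0 ∨ d k i = 1)
    (hmono : ∀ i,
      ((∀ k, 0 ≤ d k i) ∧ ∀ k l : Fin m, k ≤ l → d l i ≤ d k i) ∨
      ((∀ k, d k i ≤ 0) ∧ ∀ k l : Fin m, k ≤ l → d k i ≤ d l i))
    (i : Fin n) :
    ∃ s : ℤ, ∃ t : ℕ, t ≤ m ∧ (s = 1 ∨ s = -1) ∧
      ∀ k : Fin m, d k i = if (k : ℕ) < t then s else 0 := by
  classical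
  rcases hmono i with ⟨h0, hanti⟩ | ⟨h0, hanti⟩
  · refine ⟨1, (Finset.univ.filter (fun k => d k i = 1)).card, ?_, Or.inl rfl, ?_⟩
    · exact (Finset.card_filter_le _ _).trans (by simp)
    · intro k
      have hk := hval k i
      have hk0 := h0 k
      rcases (by omega : d k i = 1 ∨ d k i = 0) with h | h
      · rw [h, if_pos]
        have hsub : Finset.Iic k ⊆ Finset.univ.filter (fun k => d k i = 1) := by
          intro j hj
          simp only [Finset.mem_Iic] at hj
          simp only [Finset.mem_filter, Finset.mem_univ, true_and]
          have := hanti j k hj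
          have := hval j i
          omega
        have := Finset.card_le_card hsub
        rw [Fin.card_Iic] at this
        omega
      · rw [h, if_neg]
        have hsub : Finset.univ.filter (fun k => d k i = 1) ⊆ Finset.Iio k := by
          intro j hj
          simp only [Finset.mem_filter, Finset.mem_univ, true_and] at hj
          simp only [Finset.mem_Iio]
          by_contra hc
          have := hanti k j (le_of_not_gt hc)
          omega
        have := Finset.card_le_card hsub
        rw [Fin.card_Iio] at this
        omega
  · refine ⟨-1, (Finset.univ.filter (fun k => d k i = -1)).card, ?_, Or.inr rfl, ?_⟩
    · exact (Finset.card_filter_le _ _).trans (by simp)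
    · intro k
      have hk := hval k i
      have hk0 := h0 k
      rcases (by omega : d k i = -1 ∨ d k i = 0) with h | h
      · rw [h, if_pos]
        have hsub : Finset.Iic k ⊆ Finset.univ.filter (fun k => d k i = -1) := by
          intro j hj
          simp only [Finset.mem_Iic] at hj
          simp only [Finset.mem_filter, Finset.mem_univ, true_and]
          have := hanti j k hj
          have := hval j i
          omega
        have := Finset.card_le_card hsub
        rw [Fin.card_Iic] at this
        omega
      · rw [h, if_neg]
        have hsub : Finset.univ.filter (fun k => d k i = -1) ⊆ Finset.Iio k := by
          intro j hj
          simp only [Finset.mem_filter, Finset.mem_univ, true_and] at hj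
          simp only [Finset.mem_Iio]
          by_contra hc
          have := hanti k j (le_of_not_gt hc)
          omega
        have := Finset.card_le_card hsub
        rw [Fin.card_Iio] at this
        omega

lemma sum_eq_step {n m : ℕ} (d : Fin m → Fin n → ℤ)
    (s : Fin n → ℤ) (t : Fin n → ℕ) (htle : ∀ i, t i ≤ m)
    (hform : ∀ i k, d k i = if (k : ℕ) < t i then s i else 0) (i : Fin n) :
    (∑ k, d k) i = s i * (t i : ℤ) := by
  rw [Finset.sum_apply]
  calc ∑ k : Fin m, d k i
      = ∑ k : Fin m, (fun j : ℕ => if j < t i then s i else 0) (k : ℕ) :=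
        Finset.sum_congr rfl fun k _ => hform i k
    _ = ∑ k ∈ Finset.range m, (if k < t i then s i else 0) :=
        Fin.sum_univ_eq_sum_range (fun j : ℕ => if j < t i then s i else 0) m
    _ = s i * ((min (t i) m : ℕ) : ℤ) := sum_ite_lt _ _ _
    _ = s i * (t i : ℤ) := by rw [min_eq_left (htle i)]

lemma evenSum_eq_step {n m : ℕ} (d : Fin m → Fin n → ℤ)
    (s : Fin n → ℤ) (t : Fin n → ℕ) (htle : ∀ i, t i ≤ m)
    (hform : ∀ i k, d k i = if (k : ℕ) < t i then s i else 0) (i : Fin n) :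
    (∑ j, d (evenEmb m j)) i = s i * (((t i + 1) / 2 : ℕ) : ℤ) := by
  rw [Finset.sum_apply]
  calc ∑ j : Fin ((m+1)/2), d (evenEmb m j) i
      = ∑ j : Fin ((m+1)/2), (fun j : ℕ => if j < (t i + 1)/2 then s i else 0) (j : ℕ) := by
        refine Finset.sum_congr rfl fun j _ => ?_
        rw [hform i]
        simp only
        by_cases h : (evenEmb m j : ℕ) < t i
        · rw [if_pos h, if_pos (by simp [evenEmb] at h ⊢; omega)]
        · rw [if_neg h, if_neg (by simp [evenEmb] at h ⊢; omega)]
    _ = ∑ j ∈ Finset.range ((m+1)/2), (if j < (t i + 1)/2 then s i else 0) :=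
        Fin.sum_univ_eq_sum_range (fun j : ℕ => if j < (t i + 1)/2 then s i else 0) _
    _ = s i * ((min ((t i + 1)/2) ((m+1)/2) : ℕ) : ℤ) := sum_ite_lt _ _ _
    _ = _ := by rw [min_eq_left (by have := htle i; omega)]

lemma oddSum_eq_step {n m : ℕ} (d : Fin m → Fin n → ℤ)
    (s : Fin n → ℤ) (t : Fin n → ℕ) (htle : ∀ i, t i ≤ m)
    (hform : ∀ i k, d k i = if (k : ℕ) < t i then s i else 0) (i : Fin n) :
    (∑ j, d (oddEmb m j)) i = s i * ((t i / 2 : ℕ) : ℤ) := by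
  rw [Finset.sum_apply]
  calc ∑ j : Fin (m/2), d (oddEmb m j) i
      = ∑ j : Fin (m/2), (fun j : ℕ => if j < t i / 2 then s i else 0) (j : ℕ) := by
        refine Finset.sum_congr rfl fun j _ => ?_
        rw [hform i]
        simp only
        by_cases h : (oddEmb m j : ℕ) < t i
        · rw [if_pos h, if_pos (by simp [oddEmb] at h ⊢; omega)]
        · rw [if_neg h, if_neg (by simp [oddEmb] at h ⊢; omega)]
    _ = ∑ j ∈ Finset.range (m/2), (if j < t i / 2 then s i else 0) :=
        Fin.sum_univ_eq_sum_range (fun j : ℕ => if j < t i / 2 then s i else 0) _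
    _ = s i * ((min (t i / 2) (m/2) : ℕ) : ℤ) := sum_ite_lt _ _ _
    _ = _ := by rw [min_eq_left (by have := htle i; omega)]

lemma main_aux {n : ℕ} (m : ℕ) :
    ∀ (d : Fin m → Fin n → ℤ),
    (∀ k, d k ≠ 0) →
    (∀ k i, d k i = -1 ∨ d k i = 0 ∨ d k i = 1) →
    (∀ i,
      ((∀ k, 0 ≤ d k i) ∧ ∀ k l : Fin m, k ≤ l → d l i ≤ d k i) ∨
      ((∀ k, d k i ≤ 0) ∧ ∀ k l : Fin m, k ≤ l → d k i ≤ d l i)) →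
    Dmultiset (∑ k, d k) = Multiset.map d Finset.univ.val := by
  induction m using Nat.strong_induction_on with
  | _ m IH =>
  intro d hne hval hmono
  rcases Nat.eq_zero_or_pos m with hm0 | hmpos
  · subst hm0
    have hx : (∑ k : Fin 0, d k) = 0 := by simp
    rw [hx, Dmultiset, if_pos rfl]
    rfl
  choose s t htle hs hform using exists_step d hval hmono
  have hx : ∀ i, (∑ k, d k) i = s i * (t i : ℤ) := sum_eq_step d s t htle hform
  have habs : ∀ i, ((∑ k, d k) i).natAbs = t i := by
    intro i
    have h1 : (∑ k, d k) i = (t i : ℤ) ∨ (∑ k, d k) i = -(t i : ℤ) := by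
      rcases hs i with h | h
      · left; rw [hx i, h, one_mul]
      · right; rw [hx i, h]; ring
    omega
  have hnorm : normInf (∑ k, d k) = m := by
    obtain ⟨i0, hi0⟩ : ∃ i, d ⟨m-1, by omega⟩ i ≠ 0 := Function.ne_iff.mp (hne _)
    have hti0 : t i0 = m := by
      have := hform i0 ⟨m-1, by omega⟩
      by_cases h : m - 1 < t i0
      · have := htle i0; omega
      · rw [if_neg h] at this; exact absurd this hi0
    apply le_antisymm
    · exact Finset.sup_le fun i _ => by rw [habs i]; exact htle i
    · calc m = ((∑ k, d k) i0).natAbs := by rw [habs, hti0]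
        _ ≤ _ := natAbs_le_normInf _ i0
  have hx0 : (∑ k, d k) ≠ 0 := by
    intro h
    have : normInf (0 : Fin n → ℤ) = 0 := by simp [normInf]
    rw [h, this] at hnorm
    omega
  have hE : dmu (∑ k, d k) 0 = ∑ j, d (evenEmb m j) := by
    funext i
    rw [dmu_zero_right, evenSum_eq_step d s t htle hform i]
    have hxi := hx i
    rcases hs i with h | h
    · rw [h, one_mul] at hxi ⊢; rw [hxi]; omega
    · rw [h, neg_one_mul] at hxi ⊢; rw [hxi]; omega
  have hO : dmu 0 (∑ k, d k) = ∑ j, d (oddEmb m j) := by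
    funext i
    rw [dmu_zero_left, oddSum_eq_step d s t htle hform i]
    have hxi := hx i
    rcases hs i with h | h
    · rw [h, one_mul] at hxi ⊢; rw [hxi]; omega
    · rw [h, neg_one_mul] at hxi ⊢; rw [hxi]; omega
  have hmap : Multiset.map d Finset.univ.val =
      Multiset.map (fun j => d (evenEmb m j)) Finset.univ.val +
      Multiset.map (fun j => d (oddEmb m j)) Finset.univ.val := by
    rw [univ_split m, Multiset.map_add, Multiset.map_map, Multiset.map_map]
    rfl
  rcases Nat.lt_or_ge m 2 with hm1 | hm2
  · -- m = 1
    have : m = 1 := by omega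
    subst this
    rw [Dmultiset, if_neg hx0, if_pos hnorm]
    rw [Fin.sum_univ_one]
    rfl
  rcases Nat.lt_or_ge m 3 with hm2' | hm3
  · -- m = 2
    have : m = 2 := by omega
    subst this
    rw [Dmultiset, if_neg hx0, if_neg (by omega), if_pos hnorm, hE, hO, hmap]
    have e1 : (∑ j, d (evenEmb 2 j)) = d (evenEmb 2 0) := Fin.sum_univ_one _
    have e2 : (∑ j, d (oddEmb 2 j)) = d (oddEmb 2 0) := Fin.sum_univ_one _
    rw [e1, e2]
    rfl
  · -- m ≥ 3
    rw [Dmultiset, if_neg hx0, if_neg (by omega), if_neg (by omega), hE, hO, hmap]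
    congr 1
    · refine IH ((m+1)/2) (by omega) _ (fun j => hne _) (fun k i => hval _ i) ?_
      intro i
      rcases hmono i with ⟨h0, hm⟩ | ⟨h0, hm⟩
      · exact Or.inl ⟨fun k => h0 _, fun k l hkl => hm _ _ (by
          simp only [Fin.le_def, evenEmb]; have := (Fin.le_def).mp hkl; omega)⟩
      · exact Or.inr ⟨fun k => h0 _, fun k l hkl => hm _ _ (by
          simp only [Fin.le_def, evenEmb]; have := (Fin.le_def).mp hkl; omega)⟩
    · refine IH (m/2) (by omega) _ (fun j => hne _) (fun k i => hval _ i) ?_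
      intro i
      rcases hmono i with ⟨h0, hm⟩ | ⟨h0, hm⟩
      · exact Or.inl ⟨fun k => h0 _, fun k l hkl => hm _ _ (by
          simp only [Fin.le_def, oddEmb]; have := (Fin.le_def).mp hkl; omega)⟩
      · exact Or.inr ⟨fun k => h0 _, fun k l hkl => hm _ _ (by
          simp only [Fin.le_def, oddEmb]; have := (Fin.le_def).mp hkl; omega)⟩

/-- If `d¹, …, dᵐ ∈ {-1,0,1}ⁿ \ {0}` satisfy, in each coordinate `i`, either
`1 ≥ d¹ᵢ ≥ ⋯ ≥ dᵐᵢ ≥ 0` or `-1 ≤ d¹ᵢ ≤ ⋯ ≤ dᵐᵢ ≤ 0`, then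
`D(Σ_k dᵏ)` equals the multiset `{dᵏ : k = 1, …, m}`. -/
theorem Dmultiset_of_monotone_decomposition {n m : ℕ} (d : Fin m → Fin n → ℤ)
    (hne : ∀ k, d k ≠ 0)
    (hval : ∀ k i, d k i = -1 ∨ d k i = 0 ∨ d k i = 1)
    (hmono : ∀ i,
      ((∀ k, 0 ≤ d k i) ∧ ∀ k l : Fin m, k ≤ l → d l i ≤ d k i) ∨
      ((∀ k, d k i ≤ 0) ∧ ∀ k l : Fin m, k ≤ l → d k i ≤ d l i)) :
    Dmultiset (∑ k, d k) = Multiset.map d Finset.univ.val := by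
  exact main_aux m d hne hval hmono
end

section
/- (Parallelogram inequality) Let f : ℤⁿ → ℝ ∪ {+∞} be a DDM-convex function, let x, y ∈ dom f with m = ‖y − x‖_∞, and set A_k = {i : y_i − x_i ≥ k}, B_k = {i : y_i − x_i ≤ −k} for k = 1,…,m. For any subset J ⊆ {1, …, m}, with d = Σ_{k∈J} (1_{A_k} − 1_{B_k}), we have f(x) + f(y) ≥ f(x + d) + f(y − d). -/
open Finset

/-- A function `f : ℤⁿ → ℝ ∪ {+∞}` is DDM-convex if
`f(x) + f(y) ≥ f(μ(x,y)) + f(μ(y,x))` for all `x, y ∈ ℤⁿ`. -/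
def DDMConvexFn {n : ℕ} (f : (Fin n → ℤ) → EReal) : Prop :=
  ∀ x y : Fin n → ℤ, f (dmu x y) + f (dmu y x) ≤ f x + f y

set_option linter.unnecessarySeqFocus false

private lemma fl2 (p q r : ℤ) (h : p = 2*q + r) (hr : r = 0 ∨ r = 1) :
    ⌊(p : ℚ)/2⌋ = q := by
  subst h
  have e : ((2*q + r : ℤ) : ℚ)/2 = (r:ℚ)/2 + (q:ℤ) := by push_cast; ring
  rw [e, Int.floor_add_intCast]
  rcases hr with rfl | rfl <;> norm_num

private lemma ce2 (p q r : ℤ) (h : p = 2*q + r) (hr : r = 0 ∨ r = 1) :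
    ⌈(p : ℚ)/2⌉ = q + r := by
  subst h
  have e : ((2*q + r : ℤ) : ℚ)/2 = (r:ℚ)/2 + (q:ℤ) := by push_cast; ring
  rw [e, Int.ceil_add_intCast]
  rcases hr with rfl | rfl
  · norm_num
  · have h12 : ⌈((1:ℤ):ℚ)/2⌉ = 1 := by
      rw [Int.ceil_eq_iff] <;> norm_num
    rw [h12]; ring

private lemma ereal_ne_top_left {a b c : EReal} (h : a + b ≤ c) (hc : c ≠ ⊤)
    (hb : b ≠ ⊥) : a ≠ ⊤ := by
  intro ha
  rw [ha, EReal.top_add_of_ne_bot hb] at h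
  exact hc (top_le_iff.mp h)

private lemma ereal_cancel {p q r s M N : EReal}
    (hM : M ≠ ⊤) (hM' : M ≠ ⊥) (hN : N ≠ ⊤) (hN' : N ≠ ⊥)
    (h1 : p + M ≤ q + N) (h2 : r + N ≤ M + s) : p + r ≤ q + s := by
  obtain ⟨m, rfl⟩ : ∃ t : ℝ, M = t := ⟨M.toReal, (EReal.coe_toReal hM hM').symm⟩
  obtain ⟨nn, rfl⟩ : ∃ t : ℝ, N = t := ⟨N.toReal, (EReal.coe_toReal hN hN').symm⟩
  have h3 := add_le_add h1 h2
  have e1 : p + (m:EReal) + (r + (nn:EReal)) = ((m+nn : ℝ) : EReal) + (p + r) := by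
    rw [EReal.coe_add]; abel
  have e2 : q + (nn:EReal) + ((m:EReal) + s) = ((m+nn : ℝ) : EReal) + (q + s) := by
    rw [EReal.coe_add]; abel
  rw [e1, e2] at h3
  exact (EReal.addLECancellable_coe (m+nn)) h3

section
variable {n : ℕ} (x y : Fin n → ℤ)

lemma chi_cases (k : ℕ) (i : Fin n) :
    chi x y k i = 0 ∨ chi x y k i = 1 ∨ chi x y k i = -1 := by
  unfold chi; split_ifs <;> norm_num

lemma chi_align {s t : ℕ} (hst : s ≤ t) (i : Fin n) :
    chi x y t i = 0 ∨ chi x y t i = chi x y s i := by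
  have hst' : (s:ℤ) ≤ (t:ℤ) := by exact_mod_cast hst
  have hs0 : (0:ℤ) ≤ (s:ℤ) := by positivity
  by_cases a1 : (t:ℤ) ≤ y i - x i
  · by_cases a2 : y i - x i ≤ -(t:ℤ)
    · left; simp [chi, a1, a2]
    · right
      have a3 : (s:ℤ) ≤ y i - x i := by omega
      have a4 : ¬(y i - x i ≤ -(s:ℤ)) := by omega
      simp [chi, a1, a2, a3, a4]
  · by_cases a2 : y i - x i ≤ -(t:ℤ)
    · right
      have a3 : ¬((s:ℤ) ≤ y i - x i) := by omega
      have a4 : y i - x i ≤ -(s:ℤ) := by omega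
      simp [chi, a1, a2, a3, a4]
    · left; simp [chi, a1, a2]

private lemma dmu_int (a u v : ℤ) (hv : v = 0 ∨ v = u) (hu : u = 0 ∨ u = 1 ∨ u = -1) :
    ((if a ≤ a + u + v then ⌈((a + u + v + a : ℤ) : ℚ)/2⌉
      else ⌊((a + u + v + a : ℤ) : ℚ)/2⌋) = a + u)
  ∧ ((if a + u + v ≤ a then ⌈((a + (a + u + v) : ℤ) : ℚ)/2⌉
      else ⌊((a + (a + u + v) : ℤ) : ℚ)/2⌋) = a + v) := by
  rcases hv with rfl|rfl <;> rcases hu with rfl|rfl|rfl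
  · constructor
    · rw [if_pos (by omega), ce2 _ a 0 (by ring) (by norm_num)]
    · rw [if_pos (by omega), ce2 _ a 0 (by ring) (by norm_num)]
  · constructor
    · rw [if_pos (by omega), ce2 _ a 1 (by ring) (by norm_num)]
    · rw [if_neg (by omega), fl2 _ a 1 (by ring) (by norm_num)]; ring
  · constructor
    · rw [if_neg (by omega), fl2 _ (a-1) 1 (by ring) (by norm_num)]; ring
    · rw [if_pos (by omega), ce2 _ (a-1) 1 (by ring) (by norm_num)]; ring
  · constructor
    · rw [if_pos (by omega), ce2 _ a 0 (by ring) (by norm_num)]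
    · rw [if_pos (by omega), ce2 _ a 0 (by ring) (by norm_num)]
  · constructor
    · rw [if_pos (by omega), ce2 _ (a+1) 0 (by ring) (by norm_num)]; ring
    · rw [if_neg (by omega), fl2 _ (a+1) 0 (by ring) (by norm_num)]
  · constructor
    · rw [if_neg (by omega), fl2 _ (a-1) 0 (by ring) (by norm_num)]; ring
    · rw [if_pos (by omega), ce2 _ (a-1) 0 (by ring) (by norm_num)]; ring

lemma dmu_align (a : Fin n → ℤ) {s t : ℕ} (hst : s ≤ t) :
    dmu (a + chi x y s + chi x y t) a = a + chi x y s ∧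
    dmu a (a + chi x y s + chi x y t) = a + chi x y t := by
  constructor <;> funext i
  · have h := (dmu_int (a i) (chi x y s i) (chi x y t i)
      (chi_align x y hst i) (chi_cases x y s i)).1
    simpa [dmu, Pi.add_apply] using h
  · have h := (dmu_int (a i) (chi x y s i) (chi x y t i)
      (chi_align x y hst i) (chi_cases x y s i)).2
    simpa [dmu, Pi.add_apply] using h

end

def cntZ (T : Finset ℕ) (v : ℤ) : ℕ := (T.filter fun k : ℕ => (k:ℤ) ≤ v).card

def oddPart (T : Finset ℕ) : Finset ℕ :=
  T.filter fun t => Odd ((T.filter fun k => k ≤ t).card)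

def evenPart (T : Finset ℕ) : Finset ℕ :=
  T.filter fun t => ¬ Odd ((T.filter fun k => k ≤ t).card)

lemma oddPart_subset (T : Finset ℕ) : oddPart T ⊆ T := filter_subset _ _
lemma evenPart_subset (T : Finset ℕ) : evenPart T ⊆ T := filter_subset _ _

lemma part_union (T : Finset ℕ) : oddPart T ∪ evenPart T = T :=
  filter_union_filter_not_eq _ T

lemma part_disj (T : Finset ℕ) : Disjoint (oddPart T) (evenPart T) :=
  disjoint_filter_filter_not T T _

private lemma cnt_insert {M : ℕ} {S : Finset ℕ} (hM : M ∉ S) (v : ℤ) :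
    cntZ (insert M S) v = (if (M:ℤ) ≤ v then 1 else 0) + cntZ S v := by
  unfold cntZ
  rw [filter_insert]
  split_ifs with h
  · rw [card_insert_of_notMem (fun hc => hM (mem_of_mem_filter _ hc))]; omega
  · omega

private lemma cnt_full {S : Finset ℕ} {v : ℤ} (h : ∀ t ∈ S, (t:ℤ) ≤ v) :
    cntZ S v = S.card := by
  unfold cntZ; rw [filter_true_of_mem h]

lemma part_spec (T : Finset ℕ) :
    ((oddPart T).card = (T.card + 1)/2 ∧ (evenPart T).card = T.card/2) ∧
    ∀ v : ℤ, cntZ (oddPart T) v = (cntZ T v + 1)/2 ∧ cntZ (evenPart T) v = cntZ T v / 2 := by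
  induction T using Finset.induction_on_max with
  | empty => simp [oddPart, evenPart, cntZ]
  | insert M T₀ hlt ih =>
    have hM : M ∉ T₀ := fun h => absurd (hlt M h) (lt_irrefl M)
    have hfil : ∀ t ∈ T₀,
        (insert M T₀).filter (fun k => k ≤ t) = T₀.filter (fun k => k ≤ t) := by
      intro t ht
      rw [filter_insert, if_neg (by exact fun h => absurd (lt_of_le_of_lt h (hlt t ht)) (lt_irrefl M))]
    have hpM : (insert M T₀).filter (fun k => k ≤ M) = insert M T₀ := by
      apply filter_true_of_mem
      intro t ht
      rcases mem_insert.mp ht with rfl | ht'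
      · exact le_refl _
      · exact (hlt t ht').le
    have e1 : T₀.filter (fun t => Odd (((insert M T₀).filter fun k => k ≤ t).card))
        = oddPart T₀ := by
      apply filter_congr; intro t ht; rw [hfil t ht]
    have e2 : T₀.filter (fun t => ¬ Odd (((insert M T₀).filter fun k => k ≤ t).card))
        = evenPart T₀ := by
      apply filter_congr; intro t ht; rw [hfil t ht]
    have hcard : (insert M T₀).card = T₀.card + 1 := card_insert_of_notMem hM
    have hoP : oddPart (insert M T₀) =
        if Odd (T₀.card + 1) then insert M (oddPart T₀) else oddPart T₀ := by
      conv_lhs => rw [oddPart]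
      rw [filter_insert, e1, hpM, hcard]
    have heP : evenPart (insert M T₀) =
        if ¬ Odd (T₀.card + 1) then insert M (evenPart T₀) else evenPart T₀ := by
      conv_lhs => rw [evenPart]
      rw [filter_insert, e2, hpM, hcard]
    obtain ⟨⟨ihoc, ihec⟩, ihv⟩ := ih
    have hMo : M ∉ oddPart T₀ := fun h => hM (oddPart_subset _ h)
    have hMe : M ∉ evenPart T₀ := fun h => hM (evenPart_subset _ h)
    by_cases hodd : Odd (T₀.card + 1)
    · rw [hoP, if_pos hodd, heP, if_neg (by simpa using hodd)]
      have hodd' := Nat.odd_iff.mp hodd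
      constructor
      · rw [card_insert_of_notMem hMo, hcard]
        omega
      · intro v
        obtain ⟨h1, h2⟩ := ihv v
        rw [cnt_insert hM v, cnt_insert hMo v]
        split_ifs with hMv
        · have f1 : cntZ T₀ v = T₀.card := cnt_full (fun t ht => by
            have := hlt t ht; omega)
          have f2 : cntZ (oddPart T₀) v = (oddPart T₀).card := cnt_full (fun t ht => by
            have := hlt t (oddPart_subset _ ht); omega)
          have f3 : cntZ (evenPart T₀) v = (evenPart T₀).card := cnt_full (fun t ht => by
            have := hlt t (evenPart_subset _ ht); omega)
          omega
        · omega
    · rw [hoP, if_neg hodd, heP, if_pos (by simpa using hodd)]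
      have hodd' : (T₀.card + 1) % 2 = 0 := by
        rcases Nat.even_or_odd (T₀.card + 1) with he | ho
        · exact Nat.even_iff.mp he
        · exact absurd ho hodd
      constructor
      · rw [card_insert_of_notMem hMe, hcard]
        omega
      · intro v
        obtain ⟨h1, h2⟩ := ihv v
        rw [cnt_insert hM v, cnt_insert hMe v]
        split_ifs with hMv
        · have f1 : cntZ T₀ v = T₀.card := cnt_full (fun t ht => by
            have := hlt t ht; omega)
          have f2 : cntZ (oddPart T₀) v = (oddPart T₀).card := cnt_full (fun t ht => by
            have := hlt t (oddPart_subset _ ht); omega)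
          have f3 : cntZ (evenPart T₀) v = (evenPart T₀).card := cnt_full (fun t ht => by
            have := hlt t (evenPart_subset _ ht); omega)
          omega
        · omega

section
variable {n : ℕ} (x y : Fin n → ℤ)

def sigv (T : Finset ℕ) : Fin n → ℤ := ∑ k ∈ T, chi x y k

lemma sig_comp {T : Finset ℕ} (h0 : 0 ∉ T) (i : Fin n) :
    sigv x y T i = if 0 ≤ y i - x i then (cntZ T (y i - x i) : ℤ)
      else -(cntZ T (-(y i - x i)) : ℤ) := by
  have happ : sigv x y T i = ∑ k ∈ T, chi x y k i := by
    unfold sigv; exact Finset.sum_apply _ _ _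
  have hpos : ∀ k ∈ T, 1 ≤ k := by
    intro k hk
    rcases Nat.eq_zero_or_pos k with rfl | h
    · exact absurd hk h0
    · exact h
  rw [happ]
  unfold chi
  rw [Finset.sum_sub_distrib]
  split_ifs with hw
  · have h2 : ∑ k ∈ T, (if y i - x i ≤ -(k:ℤ) then (1:ℤ) else 0) = 0 := by
      apply Finset.sum_eq_zero
      intro k hk
      rw [if_neg (by have := hpos k hk; omega)]
    rw [h2, Finset.sum_boole]
    simp [cntZ]
  · have h1 : ∑ k ∈ T, (if (k:ℤ) ≤ y i - x i then (1:ℤ) else 0) = 0 := by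
      apply Finset.sum_eq_zero
      intro k hk
      rw [if_neg (by have := hpos k hk; omega)]
    rw [h1, Finset.sum_boole]
    have : T.filter (fun k : ℕ => y i - x i ≤ -(k:ℤ)) =
        T.filter (fun k : ℕ => (k:ℤ) ≤ -(y i - x i)) := by
      apply filter_congr
      intro k hk
      constructor <;> intro h <;> omega
    rw [this]
    simp [cntZ]

lemma dmu_sig (a : Fin n → ℤ) (T : Finset ℕ) (h0 : 0 ∉ T) :
    dmu (a + sigv x y T) a = a + sigv x y (oddPart T) ∧
    dmu a (a + sigv x y T) = a + sigv x y (evenPart T) := by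
  have h0o : 0 ∉ oddPart T := fun h => h0 (oddPart_subset _ h)
  have h0e : 0 ∉ evenPart T := fun h => h0 (evenPart_subset _ h)
  have hcnt := (part_spec T).2
  constructor <;> funext i <;>
    simp only [dmu, Pi.add_apply] <;>
    rw [sig_comp x y h0 i] <;>
    [rw [sig_comp x y h0o i]; rw [sig_comp x y h0e i]] <;>
    rcases le_or_gt 0 (y i - x i) with hw | hw
  · -- odd, w ≥ 0
    rw [if_pos hw, if_pos hw, (hcnt (y i - x i)).1]
    set c := cntZ T (y i - x i) with hc
    rw [if_pos (show a i ≤ a i + (c:ℤ) by omega)]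
    rcases Nat.even_or_odd c with ⟨j, hj⟩ | ⟨j, hj⟩
    · rw [ce2 _ (a i + j) 0 (by push_cast [hj]; ring) (Or.inl rfl)]; omega
    · rw [ce2 _ (a i + j) 1 (by push_cast [hj]; ring) (Or.inr rfl)]; omega
  · -- odd, w < 0
    have hw' : ¬ ((0:ℤ) ≤ y i - x i) := by omega
    rw [if_neg hw', if_neg hw', (hcnt (-(y i - x i))).1]
    set c := cntZ T (-(y i - x i)) with hc
    rcases Nat.eq_zero_or_pos c with hc0 | hcpos
    · rw [if_pos (show a i ≤ a i + -(c:ℤ) by omega)]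
      rw [ce2 _ (a i) 0 (by push_cast [hc0]; ring) (Or.inl rfl)]; omega
    · rw [if_neg (show ¬ (a i ≤ a i + -(c:ℤ)) by omega)]
      rcases Nat.even_or_odd c with ⟨j, hj⟩ | ⟨j, hj⟩
      · rw [fl2 _ (a i - j) 0 (by push_cast [hj]; ring) (Or.inl rfl)]; omega
      · rw [fl2 _ (a i - j - 1) 1 (by push_cast [hj]; ring) (Or.inr rfl)]; omega
  · -- even, w ≥ 0
    rw [if_pos hw, if_pos hw, (hcnt (y i - x i)).2]
    set c := cntZ T (y i - x i) with hc
    rcases Nat.eq_zero_or_pos c with hc0 | hcpos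
    · rw [if_pos (show a i + (c:ℤ) ≤ a i by omega)]
      rw [ce2 _ (a i) 0 (by push_cast [hc0]; ring) (Or.inl rfl)]; omega
    · rw [if_neg (show ¬ (a i + (c:ℤ) ≤ a i) by omega)]
      rcases Nat.even_or_odd c with ⟨j, hj⟩ | ⟨j, hj⟩
      · rw [fl2 _ (a i + j) 0 (by push_cast [hj]; ring) (Or.inl rfl)]; omega
      · rw [fl2 _ (a i + j) 1 (by push_cast [hj]; ring) (Or.inr rfl)]; omega
  · -- even, w < 0
    have hw' : ¬ ((0:ℤ) ≤ y i - x i) := by omega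
    rw [if_neg hw', if_neg hw', (hcnt (-(y i - x i))).2]
    set c := cntZ T (-(y i - x i)) with hc
    rw [if_pos (show a i + -(c:ℤ) ≤ a i by omega)]
    rcases Nat.even_or_odd c with ⟨j, hj⟩ | ⟨j, hj⟩
    · rw [ce2 _ (a i - j) 0 (by push_cast [hj]; ring) (Or.inl rfl)]; omega
    · rw [ce2 _ (a i - j - 1) 1 (by push_cast [hj]; ring) (Or.inr rfl)]; omega

end

section
variable {n : ℕ} (x y : Fin n → ℤ)

lemma sigv_union {A B : Finset ℕ} (h : Disjoint A B) :
    sigv x y (A ∪ B) = sigv x y A + sigv x y B := Finset.sum_union h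

lemma auxD (f : (Fin n → ℤ) → EReal) (hbot : ∀ v, f v ≠ ⊥) (hf : DDMConvexFn f) :
    ∀ N : ℕ, ∀ A T : Finset ℕ, T.card ≤ N → Disjoint A T → 0 ∉ T →
      f (x + sigv x y A) ≠ ⊤ → f (x + sigv x y (A ∪ T)) ≠ ⊤ →
      ∀ U ⊆ T, f (x + sigv x y (A ∪ U)) ≠ ⊤ := by
  intro N
  induction N with
  | zero =>
    intro A T hT hd h0 hA hAT U hU
    have hTe : T = ∅ := card_eq_zero.mp (Nat.le_antisymm hT (Nat.zero_le _))
    subst hTe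
    rw [subset_empty.mp hU]
    simpa using hA
  | succ N ih =>
    intro A T hT hd h0 hA hAT U hU
    by_cases hT1 : T.card ≤ 1
    · rcases Finset.card_le_one_iff_subset_singleton.mp hT1 with ⟨t, hts⟩
      rcases Finset.subset_singleton_iff.mp (hU.trans hts) with rfl | rfl
      · simpa using hA
      · have hTt : T = {t} :=
          Finset.Subset.antisymm hts (singleton_subset_iff.mpr (hU (mem_singleton_self t)))
        rw [hTt] at hAT
        exact hAT
    · -- T.card ≥ 2 : split via directed midpoints
      have hOs := oddPart_subset T
      have hEs := evenPart_subset T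
      have hdO : Disjoint A (oddPart T) := hd.mono_right hOs
      have hdE : Disjoint A (evenPart T) := hd.mono_right hEs
      have h0O : 0 ∉ oddPart T := fun h => h0 (hOs h)
      have h0E : 0 ∉ evenPart T := fun h => h0 (hEs h)
      obtain ⟨⟨hcO, hcE⟩, -⟩ := part_spec T
      have hsplit := dmu_sig x y (x + sigv x y A) T h0
      have hU1 : x + sigv x y (A ∪ T) = (x + sigv x y A) + sigv x y T := by
        rw [sigv_union x y hd, add_assoc]
      have hddm := hf ((x + sigv x y A) + sigv x y T) (x + sigv x y A)
      rw [hsplit.1, hsplit.2, ← hU1] at hddm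
      have eO : (x + sigv x y A) + sigv x y (oddPart T) = x + sigv x y (A ∪ oddPart T) := by
        rw [sigv_union x y hdO, add_assoc]
      have eE : (x + sigv x y A) + sigv x y (evenPart T) = x + sigv x y (A ∪ evenPart T) := by
        rw [sigv_union x y hdE, add_assoc]
      rw [eO, eE] at hddm
      have hRHS : f (x + sigv x y (A ∪ T)) + f (x + sigv x y A) ≠ ⊤ :=
        (EReal.add_lt_top hAT hA).ne
      have hfO : f (x + sigv x y (A ∪ oddPart T)) ≠ ⊤ :=
        ereal_ne_top_left hddm hRHS (hbot _)
      have hfE : f (x + sigv x y (A ∪ evenPart T)) ≠ ⊤ := by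
        rw [add_comm] at hddm
        exact ereal_ne_top_left hddm hRHS (hbot _)
      -- recurse
      have hcard2 : 2 ≤ T.card := by omega
      have hcObd : (oddPart T).card ≤ N := by omega
      have hcEbd : (evenPart T).card ≤ N := by omega
      have step1 : f (x + sigv x y (A ∪ (U ∩ oddPart T))) ≠ ⊤ :=
        ih A (oddPart T) hcObd hdO h0O hA hfO _ inter_subset_right
      have hAET : (A ∪ evenPart T) ∪ oddPart T = A ∪ T := by
        rw [union_assoc, union_comm (evenPart T), part_union]
      have step2 : f (x + sigv x y ((A ∪ evenPart T) ∪ (U ∩ oddPart T))) ≠ ⊤ := by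
        apply ih (A ∪ evenPart T) (oddPart T) hcObd
          (disjoint_union_left.mpr ⟨hdO, (part_disj T).symm⟩) h0O hfE _ _ inter_subset_right
        rw [hAET]
        exact hAT
      have hswap : (A ∪ evenPart T) ∪ (U ∩ oddPart T)
          = (A ∪ (U ∩ oddPart T)) ∪ evenPart T := by
        rw [union_assoc, union_assoc, union_comm (evenPart T)]
      rw [hswap] at step2
      have hdisj3 : Disjoint (A ∪ (U ∩ oddPart T)) (evenPart T) :=
        disjoint_union_left.mpr ⟨hdE, ((part_disj T).mono_left inter_subset_right)⟩
      have step3 := ih (A ∪ (U ∩ oddPart T)) (evenPart T) hcEbd hdisj3 h0E step1 step2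
        (U ∩ evenPart T) inter_subset_right
      have hfin : (A ∪ (U ∩ oddPart T)) ∪ (U ∩ evenPart T) = A ∪ U := by
        ext k
        simp only [mem_union, mem_inter]
        constructor
        · tauto
        · intro h
          rcases h with h | h
          · tauto
          · have hkT : k ∈ T := hU h
            rw [← part_union T] at hkT
            rcases mem_union.mp hkT with h' | h' <;> tauto
      rw [hfin] at step3
      exact step3

end

section
variable {n : ℕ} (x y : Fin n → ℤ)

lemma auxB (f : (Fin n → ℤ) → EReal) (hbot : ∀ v, f v ≠ ⊥) (hf : DDMConvexFn f) :
    ∀ N : ℕ, ∀ A T S : Finset ℕ, T.card ≤ N → S ⊆ T → Disjoint A T →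
      (∀ U ⊆ A ∪ T, f (x + sigv x y U) ≠ ⊤) →
      f (x + sigv x y (A ∪ S)) + f (x + sigv x y (A ∪ (T \ S))) ≤
        f (x + sigv x y A) + f (x + sigv x y (A ∪ T)) := by
  intro N
  induction N with
  | zero =>
    intro A T S hT hS hd Hfin
    have hTe : T = ∅ := card_eq_zero.mp (Nat.le_antisymm hT (Nat.zero_le _))
    subst hTe
    rw [subset_empty.mp hS, sdiff_empty, union_empty]
  | succ N ih =>
    intro A T S hT hS hd Hfin
    by_cases hS0 : S = ∅
    · subst hS0
      rw [union_empty, sdiff_empty]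
    by_cases hST : S = T
    · subst hST
      rw [sdiff_self, Finset.bot_eq_empty, union_empty]
      exact le_of_eq (add_comm _ _)
    -- nonempty proper S
    have hSne : S.Nonempty := nonempty_iff_ne_empty.mpr hS0
    have hTne : T.Nonempty := hSne.mono hS
    set t' := T.max' hTne with ht'def
    have ht'T : t' ∈ T := T.max'_mem hTne
    have ht'A : t' ∉ A := fun h => (disjoint_left.mp hd) h ht'T
    have key : ∀ S' : Finset ℕ, S' ⊆ T → S'.Nonempty → S' ≠ T → t' ∉ S' →
        f (x + sigv x y (A ∪ S')) + f (x + sigv x y (A ∪ (T \ S'))) ≤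
          f (x + sigv x y A) + f (x + sigv x y (A ∪ T)) := by
      intro S' hS'T hS'ne hS'neT hmax
      have hS'T' : S' ⊆ T.erase t' := fun k hk =>
        mem_erase.mpr ⟨fun he => hmax (he ▸ hk), hS'T hk⟩
      have hcT' : (T.erase t').card = T.card - 1 := card_erase_of_mem ht'T
      have hcT1 : 1 ≤ T.card := Nat.one_le_iff_ne_zero.mpr
        (fun h => by simp [card_eq_zero.mp h] at ht'T)
      have ht'nT' : t' ∉ T.erase t' := notMem_erase _ _
      have hdT' : Disjoint A (T.erase t') := hd.mono_right (erase_subset _ _)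
      have hTT' : T \ T.erase t' = {t'} := by
        rw [Finset.sdiff_erase ht'T, sdiff_self]
        rfl
      by_cases hcase : S' = T.erase t'
      · -- telescope case
        rw [hcase, hTT']
        have hT'ne : (T.erase t').Nonempty := hcase ▸ hS'ne
        have hcard2 : 1 < T.card := by
          have h0 : 0 < (T.erase t').card := card_pos.mpr hT'ne
          omega
        set s := T.min' hTne with hsdef
        have hslt : s < t' := T.min'_lt_max'_of_card hcard2
        have hsT : s ∈ T := T.min'_mem hTne
        have hsT' : s ∈ T.erase t' := mem_erase.mpr ⟨ne_of_lt hslt, hsT⟩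
        have hsA : s ∉ A := fun h => (disjoint_left.mp hd) h hsT
        -- (i) : IH on window T.erase s at base A ∪ {s}, subset {t'}
        have hd1 : Disjoint (A ∪ {s}) (T.erase s) := by
          rw [disjoint_union_left]
          exact ⟨hd.mono_right (erase_subset _ _),
            disjoint_singleton_left.mpr (notMem_erase _ _)⟩
        have hAsT : (A ∪ {s}) ∪ T.erase s = A ∪ T := by
          rw [union_assoc]
          congr 1
          rw [← insert_eq, insert_erase hsT]
        have hi := ih (A ∪ {s}) (T.erase s) {t'}
          (by rw [card_erase_of_mem hsT]; omega)
          (singleton_subset_iff.mpr (mem_erase.mpr ⟨(ne_of_lt hslt).symm, ht'T⟩))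
          hd1
          (by rw [hAsT]; exact Hfin)
        have e2 : (A ∪ {s}) ∪ (T.erase s \ {t'}) = A ∪ T.erase t' := by
          rw [sdiff_singleton_eq_erase, erase_right_comm, union_assoc]
          congr 1
          rw [← insert_eq, insert_erase (mem_erase.mpr ⟨ne_of_lt hslt, hsT⟩)]
        rw [hAsT, e2] at hi
        -- (ii) : aligned DDM step at base A
        have halign := dmu_align x y (x + sigv x y A) hslt.le
        have hddm := hf ((x + sigv x y A) + chi x y s + chi x y t') (x + sigv x y A)
        rw [halign.1, halign.2] at hddm
        have hchis : sigv x y {s} = chi x y s := Finset.sum_singleton _ _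
        have hchit : sigv x y {t'} = chi x y t' := Finset.sum_singleton _ _
        have es : (x + sigv x y A) + chi x y s = x + sigv x y (A ∪ {s}) := by
          rw [sigv_union x y (disjoint_singleton_right.mpr hsA), hchis, add_assoc]
        have et : (x + sigv x y A) + chi x y t' = x + sigv x y (A ∪ {t'}) := by
          rw [sigv_union x y (disjoint_singleton_right.mpr ht'A), hchit, add_assoc]
        have hd2 : Disjoint (A ∪ {s}) {t'} := by
          rw [disjoint_union_left]
          exact ⟨disjoint_singleton_right.mpr ht'A,
            disjoint_singleton_right.mpr (by
              rw [mem_singleton]; exact (ne_of_lt hslt).symm)⟩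
        have est : (x + sigv x y A) + chi x y s + chi x y t'
            = x + sigv x y ((A ∪ {s}) ∪ {t'}) := by
          rw [sigv_union x y hd2, hchit, ← add_assoc, es]
        rw [est, es, et] at hddm
        -- cancel
        have hsub1 : (A ∪ {s}) ∪ {t'} ⊆ A ∪ T :=
          union_subset (union_subset subset_union_left
            (singleton_subset_iff.mpr (mem_union_right _ hsT)))
            (singleton_subset_iff.mpr (mem_union_right _ ht'T))
        have hsub2 : A ∪ {s} ⊆ A ∪ T :=
          union_subset subset_union_left
            (singleton_subset_iff.mpr (mem_union_right _ hsT))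
        have hM1 : f (x + sigv x y ((A ∪ {s}) ∪ {t'})) ≠ ⊤ := Hfin _ hsub1
        have hN1 : f (x + sigv x y (A ∪ {s})) ≠ ⊤ := Hfin _ hsub2
        have h1 : f (x + sigv x y (A ∪ T.erase t')) + f (x + sigv x y ((A ∪ {s}) ∪ {t'}))
            ≤ f (x + sigv x y (A ∪ T)) + f (x + sigv x y (A ∪ {s})) := by
          calc f (x + sigv x y (A ∪ T.erase t')) + f (x + sigv x y ((A ∪ {s}) ∪ {t'}))
              = f (x + sigv x y ((A ∪ {s}) ∪ {t'})) + f (x + sigv x y (A ∪ T.erase t')) :=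
                add_comm _ _
            _ ≤ f (x + sigv x y (A ∪ {s})) + f (x + sigv x y (A ∪ T)) := hi
            _ = _ := add_comm _ _
        have h2 : f (x + sigv x y (A ∪ {t'})) + f (x + sigv x y (A ∪ {s}))
            ≤ f (x + sigv x y ((A ∪ {s}) ∪ {t'})) + f (x + sigv x y A) := by
          calc f (x + sigv x y (A ∪ {t'})) + f (x + sigv x y (A ∪ {s}))
              = f (x + sigv x y (A ∪ {s})) + f (x + sigv x y (A ∪ {t'})) := add_comm _ _
            _ ≤ _ := hddm
        exact (ereal_cancel hM1 (hbot _) hN1 (hbot _) h1 h2).trans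
          (le_of_eq (add_comm _ _))
      · -- general case
        have hssub : S' ⊂ T.erase t' := Finset.ssubset_iff_subset_ne.mpr ⟨hS'T', hcase⟩
        have ha := ih A (T.erase t') S' (by omega) hS'T' hdT'
          (fun U hU => Hfin U (hU.trans (union_subset_union_right (erase_subset _ _))))
        have hdb : Disjoint (A ∪ (T.erase t' \ S')) (S' ∪ {t'}) := by
          rw [disjoint_union_left, disjoint_union_right, disjoint_union_right]
          exact ⟨⟨hd.mono_right hS'T, disjoint_singleton_right.mpr ht'A⟩,
            ⟨sdiff_disjoint, disjoint_singleton_right.mpr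
              (fun h => ht'nT' (mem_sdiff.mp h).1)⟩⟩
        have inner : (T.erase t' \ S') ∪ (S' ∪ {t'}) = T := by
          rw [← union_assoc, sdiff_union_of_subset hS'T', union_comm,
            ← insert_eq, insert_erase ht'T]
        have hbigU : (A ∪ (T.erase t' \ S')) ∪ (S' ∪ {t'}) = A ∪ T := by
          rw [union_assoc, inner]
        have hb := ih (A ∪ (T.erase t' \ S')) (S' ∪ {t'}) {t'}
          (by
            have h1 : S'.card < (T.erase t').card := card_lt_card hssub
            have h2 : (S' ∪ {t'}).card ≤ S'.card + 1 := card_union_le _ _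
            omega)
          subset_union_right
          hdb
          (by rw [hbigU]; exact Hfin)
        have eb1 : (S' ∪ {t'}) \ {t'} = S' :=
          union_sdiff_cancel_right (disjoint_singleton_right.mpr hmax)
        have eb2 : (A ∪ (T.erase t' \ S')) ∪ S' = A ∪ T.erase t' := by
          rw [union_assoc, sdiff_union_of_subset hS'T']
        have eb3 : (A ∪ (T.erase t' \ S')) ∪ {t'} = A ∪ (T \ S') := by
          rw [union_assoc]
          congr 1
          rw [erase_sdiff_comm, union_comm, ← insert_eq,
            insert_erase (mem_sdiff.mpr ⟨ht'T, hmax⟩)]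
        rw [eb1, eb2, eb3, hbigU] at hb
        -- cancel : M = f(A∪(T'\S')), N = f(A∪T')
        have hM1 : f (x + sigv x y (A ∪ (T.erase t' \ S'))) ≠ ⊤ :=
          Hfin _ (union_subset_union_right (sdiff_subset.trans (erase_subset _ _)))
        have hN1 : f (x + sigv x y (A ∪ T.erase t')) ≠ ⊤ :=
          Hfin _ (union_subset_union_right (erase_subset _ _))
        exact ereal_cancel hM1 (hbot _) hN1 (hbot _) ha hb
    by_cases hmax : t' ∈ S
    · have hne1 : (T \ S).Nonempty := by
        rw [nonempty_iff_ne_empty]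
        intro he
        exact hST (Finset.Subset.antisymm hS (sdiff_eq_empty_iff_subset.mp he))
      have hne2 : T \ S ≠ T := by
        intro he
        have hdisj : Disjoint S T := sdiff_eq_self_iff_disjoint.mp he
        exact hS0 (eq_empty_iff_forall_notMem.mpr
          (fun k hk => (disjoint_left.mp hdisj) hk (hS hk)))
      have hc := key (T \ S) sdiff_subset hne1 hne2
        (fun h => (mem_sdiff.mp h).2 hmax)
      rw [Finset.sdiff_sdiff_eq_self hS] at hc
      calc f (x + sigv x y (A ∪ S)) + f (x + sigv x y (A ∪ (T \ S)))
          = f (x + sigv x y (A ∪ (T \ S))) + f (x + sigv x y (A ∪ S)) := add_comm _ _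
        _ ≤ _ := hc
    · exact key S hS hSne hST hmax

end

/-- Parallelogram inequality for DDM-convex functions: for `x, y ∈ dom f` with
`m = ‖y - x‖_∞` and any `J ⊆ {1, …, m}`, with `d = Σ_{k∈J}(1_{A_k} - 1_{B_k})`,
`f(x) + f(y) ≥ f(x + d) + f(y - d)`. -/
theorem ddmConvex_parallelogram_inequality {n : ℕ} (f : (Fin n → ℤ) → EReal)
    (hbot : ∀ x, f x ≠ ⊥) (hf : DDMConvexFn f)
    (x y : Fin n → ℤ) (hx : f x ≠ ⊤) (hy : f y ≠ ⊤)
    (m : ℕ) (hm : normInf (y - x) = m)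
    (J : Finset ℕ) (hJ : J ⊆ Finset.Icc 1 m) :
    f (x + ∑ k ∈ J, chi x y k) + f (y - ∑ k ∈ J, chi x y k) ≤ f x + f y := by
  have h0 : (0 : ℕ) ∉ Finset.Icc 1 m := by simp
  have hzb : ∀ i, ((y - x) i).natAbs ≤ m := by
    intro i
    rw [← hm]
    exact Finset.le_sup (f := fun j => ((y - x) j).natAbs) (mem_univ i)
  -- the full window reaches y
  have hfull : x + sigv x y (Finset.Icc 1 m) = y := by
    funext i
    have hb := hzb i
    rw [Pi.sub_apply] at hb
    simp only [Pi.add_apply]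
    rw [sig_comp x y h0 i]
    rcases le_or_gt 0 (y i - x i) with hw | hw
    · rw [if_pos hw]
      have hfil : (Finset.Icc 1 m).filter (fun k : ℕ => (k:ℤ) ≤ y i - x i)
          = Finset.Icc 1 (y i - x i).toNat := by
        ext k
        simp only [mem_filter, mem_Icc]
        omega
      simp only [cntZ]
      rw [hfil, Nat.card_Icc]
      omega
    · rw [if_neg (by omega)]
      have hfil : (Finset.Icc 1 m).filter (fun k : ℕ => (k:ℤ) ≤ -(y i - x i))
          = Finset.Icc 1 (-(y i - x i)).toNat := by
        ext k
        simp only [mem_filter, mem_Icc]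
        omega
      simp only [cntZ]
      rw [hfil, Nat.card_Icc]
      omega
  have hempty : x + sigv x y (∅ : Finset ℕ) = x := by
    simp [sigv]
  have hxe : f (x + sigv x y (∅ : Finset ℕ)) ≠ ⊤ := by rw [hempty]; exact hx
  have hye : f (x + sigv x y ((∅ : Finset ℕ) ∪ Finset.Icc 1 m)) ≠ ⊤ := by
    rw [empty_union, hfull]; exact hy
  have hD := auxD x y f hbot hf (Finset.Icc 1 m).card ∅ (Finset.Icc 1 m) le_rfl
    (disjoint_left.mpr (by simp)) h0 hxe hye
  have hB := auxB x y f hbot hf (Finset.Icc 1 m).card ∅ (Finset.Icc 1 m) J le_rfl hJ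
    (disjoint_left.mpr (by simp))
    (fun U hU => by
      have := hD U (by rwa [empty_union] at hU)
      rwa [empty_union] at this)
  rw [empty_union, empty_union, empty_union, hempty] at hB
  -- identify the two points
  have hcompl : x + sigv x y (Finset.Icc 1 m \ J) = y - sigv x y J := by
    have hsd : sigv x y (Finset.Icc 1 m \ J) + sigv x y J = sigv x y (Finset.Icc 1 m) :=
      Finset.sum_sdiff hJ
    have h1 : sigv x y (Finset.Icc 1 m \ J)
        = sigv x y (Finset.Icc 1 m) - sigv x y J := eq_sub_of_add_eq hsd
    rw [h1]
    have h2 : x + (sigv x y (Finset.Icc 1 m) - sigv x y J)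
        = (x + sigv x y (Finset.Icc 1 m)) - sigv x y J := by abel
    rw [h2, hfull]
  rw [hfull, hcompl] at hB
  exact hB
end

section
/- For a function f : ℤⁿ → ℝ ∪ {+∞}, with notation A_k = {i : y_i − x_i ≥ k}, B_k = {i : y_i − x_i ≤ −k} (k = 1,…,m, m = ‖y − x‖_∞) for each pair x, y, the following are equivalent: (1) f is DDM-convex; (2) dom f is a DDM-convex set and f(x) + f(y) ≥ f(μ(x,y)) + f(μ(y,x)) for all x, y with ‖x − y‖_∞ = 2; (3) for every x, y ∈ dom f and every J ⊆ {1,…,m}, setting d = Σ_{k∈J}(1_{A_k} − 1_{B_k}), one has f(x) + f(y) ≥ f(x + d) + f(y − d); (4) for every x, y ∈ dom f, f(x) + f(y) ≥ f(x + 1_{A_m} − 1_{B_m}) + f(y − 1_{A_m} + 1_{B_m}); (5) for every x, y ∈ dom f and every α ∈ {1,…,m}, setting d = Σ_{k=1}^α (1_{A_k} − 1_{B_k}), one has f(x) + f(y) ≥ f(x + d) + f(y − d). -/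
open Finset

namespace DDMAux

/-! ### Cap functions -/

def IsCap (h : ℕ → ℕ) : Prop := h 0 = 0 ∧ ∀ t, h t ≤ h (t + 1) ∧ h (t + 1) ≤ h t + 1

lemma IsCap.mono {h : ℕ → ℕ} (hc : IsCap h) : Monotone h :=
  monotone_nat_of_le_succ fun t => (hc.2 t).1

lemma IsCap.le_add {h : ℕ → ℕ} (hc : IsCap h) (t k : ℕ) : h (t + k) ≤ h t + k := by
  induction k with
  | zero => simp
  | succ k ih =>
    have h1 := (hc.2 (t + k)).2
    have h2 : t + (k + 1) = t + k + 1 := by omega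
    rw [h2]; omega

lemma IsCap.le_self {h : ℕ → ℕ} (hc : IsCap h) (t : ℕ) : h t ≤ t := by
  have := hc.le_add 0 t
  simpa [hc.1] using this

lemma IsCap.compl {h : ℕ → ℕ} (hc : IsCap h) : IsCap (fun t => t - h t) := by
  refine ⟨by simp [hc.1], fun t => ?_⟩
  have h1 := (hc.2 t).1; have h2 := (hc.2 t).2
  have h3 := hc.le_self t; have h4 := hc.le_self (t + 1)
  dsimp only
  omega

lemma IsCap.eq_id {h : ℕ → ℕ} (hc : IsCap h) {A : ℕ} (hA : h A = A) {r : ℕ} (hr : r ≤ A) :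
    h r = r := by
  have h1 := hc.le_add r (A - r)
  have h2 := hc.le_self r
  have h3 : r + (A - r) = A := by omega
  rw [h3] at h1; omega

/-! ### Reparametrization -/

lemma reparam (g h : ℕ → ℕ) (hg : IsCap g) (hh : IsCap h)
    (hcond : ∀ t, g (t + 1) = g t → h (t + 1) = h t) (T : ℕ) :
    ∃ ψ : ℕ → ℕ, IsCap ψ ∧ ∀ t, t ≤ T → ψ (g t) = h t := by
  classical
  have hconst : ∀ t k, g (t + k) = g t → h (t + k) = h t := by
    intro t k hk
    induction k with
    | zero => rfl
    | succ k ih =>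
      have harr : t + (k + 1) = t + k + 1 := by omega
      rw [harr] at hk ⊢
      have hm1 : g t ≤ g (t + k) := hg.mono (by omega)
      have hm2 : g (t + k) ≤ g (t + k + 1) := (hg.2 _).1
      have e1 : g (t + k + 1) = g (t + k) := by omega
      have e2 := hcond _ e1
      rw [e2]
      exact ih (by omega)
  have hconst' : ∀ t t', t ≤ t' → g t' = g t → h t' = h t := by
    intro t t' htt hgg
    have harr : t + (t' - t) = t' := by omega
    have := hconst t (t' - t) (by rw [harr]; exact hgg)
    rw [harr] at this; exact this
  obtain ⟨D, hD0, hDle, hDgr, hDfound, hDmono⟩ :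
      ∃ D : ℕ → ℕ, (∀ r, g (D r) ≤ r) ∧ (∀ r, D r ≤ T) ∧
        (∀ r k, D r < k → k ≤ T → ¬ g k ≤ r) ∧
        (∀ r t, t ≤ T → g t ≤ r → t ≤ D r) ∧ (∀ r, D r ≤ D (r + 1)) := by
    refine ⟨fun r => Nat.findGreatest (fun t => g t ≤ r) T, fun r => ?_, fun r => ?_,
      fun r k h1 h2 => ?_, fun r t h1 h2 => ?_, fun r => ?_⟩
    · exact Nat.findGreatest_spec (P := fun t => g t ≤ r) (Nat.zero_le T) (by simp [hg.1])
    · exact Nat.findGreatest_le T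
    · exact Nat.findGreatest_is_greatest (P := fun t => g t ≤ r) (n := T) h1 h2
    · exact Nat.le_findGreatest h1 h2
    · exact Nat.findGreatest_mono (fun k hk => le_trans hk (by omega)) le_rfl
  refine ⟨fun r => h (D r), ⟨?_, ?_⟩, ?_⟩
  · have h1 : g (D 0) = 0 := Nat.le_zero.mp (hD0 0)
    have h2 : h (D 0) = h 0 := hconst' 0 (D 0) (Nat.zero_le _) (by rw [h1, hg.1])
    dsimp only
    rw [h2, hh.1]
  · intro r
    dsimp only
    constructor
    · exact hh.mono (hDmono r)
    · by_cases hcmp : D (r + 1) ≤ D r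
      · have := hh.mono hcmp; omega
      · push_neg at hcmp
        have hDr1T : D r + 1 ≤ T := le_trans hcmp (hDle _)
        have hgt : ¬ g (D r + 1) ≤ r := hDgr r (D r + 1) (by omega) hDr1T
        have hslope : g (D r + 1) ≤ g (D r) + 1 := (hg.2 _).2
        have hval : g (D r + 1) = r + 1 := by have := hD0 r; omega
        have hmono2 : g (D r + 1) ≤ g (D (r + 1)) := hg.mono hcmp
        have hval2 : g (D (r + 1)) = r + 1 := by have := hD0 (r + 1); omega
        have heq : h (D (r + 1)) = h (D r + 1) :=
          hconst' (D r + 1) (D (r + 1)) hcmp (by omega)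
        have := (hh.2 (D r)).2
        omega
  · intro t hT
    dsimp only
    have h1 : t ≤ D (g t) := hDfound _ t hT le_rfl
    have h2 : g (D (g t)) ≤ g t := hD0 _
    have h3 : g t ≤ g (D (g t)) := hg.mono h1
    exact hconst' t (D (g t)) h1 (by omega)

/-! ### EReal helpers -/

lemma exists_real {a : EReal} (h1 : a ≠ ⊤) (h2 : a ≠ ⊥) : ∃ r : ℝ, a = (r : EReal) :=
  ⟨a.toReal, (EReal.coe_toReal h1 h2).symm⟩

lemma fin_of_le {a b c d : EReal} (h : a + b ≤ c + d) (ha : a ≠ ⊥) (hb : b ≠ ⊥)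
    (hc : c ≠ ⊤) (hd : d ≠ ⊤) : a ≠ ⊤ ∧ b ≠ ⊤ := by
  have hcd : c + d ≠ ⊤ := (EReal.add_lt_top hc hd).ne
  constructor
  · rintro rfl; rw [EReal.top_add_of_ne_bot hb] at h; exact hcd (top_le_iff.mp h)
  · rintro rfl; rw [EReal.add_top_of_ne_bot ha] at h; exact hcd (top_le_iff.mp h)

/-! ### Vector moves -/

variable {n : ℕ}

def Mv (x y : Fin n → ℤ) (h : ℕ → ℕ) : Fin n → ℤ := fun i =>
  if x i ≤ y i then (h (y i - x i).toNat : ℤ) else -(h (x i - y i).toNat : ℤ)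

lemma le_normInf (z : Fin n → ℤ) (i : Fin n) : (z i).natAbs ≤ normInf z := by
  unfold normInf
  exact Finset.le_sup (f := fun j => (z j).natAbs) (Finset.mem_univ i)

lemma normInf_le (z : Fin n → ℤ) (K : ℕ) (hb : ∀ i, (z i).natAbs ≤ K) : normInf z ≤ K := by
  unfold normInf
  exact Finset.sup_le fun i _ => hb i

lemma normInf_sub_comm (x y : Fin n → ℤ) : normInf (x - y) = normInf (y - x) := by
  unfold normInf
  refine Finset.sup_congr rfl fun i _ => ?_
  simp only [Pi.sub_apply]
  omega

lemma abs_le_of_normInf {x y : Fin n → ℤ} {M : ℕ} (hM : normInf (y - x) ≤ M) (i : Fin n) :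
    (y i - x i).natAbs ≤ M := by
  have := le_normInf (y - x) i
  simp only [Pi.sub_apply] at this
  omega

lemma Mv_id (x y : Fin n → ℤ) : x + Mv x y (fun t => t) = y := by
  funext i
  simp only [Pi.add_apply, Mv]
  split_ifs with h <;> omega

lemma Mv_add (x y : Fin n → ℤ) (φ ψ : ℕ → ℕ) :
    Mv x y (fun t => φ t + ψ t) = Mv x y φ + Mv x y ψ := by
  funext i
  simp only [Pi.add_apply, Mv]
  split_ifs with h <;> push_cast <;> ring

lemma Mv_sub (x y : Fin n → ℤ) (φ ψ : ℕ → ℕ) (hle : ∀ t, ψ t ≤ φ t) :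
    Mv x y (fun t => φ t - ψ t) = Mv x y φ - Mv x y ψ := by
  funext i
  simp only [Pi.sub_apply, Mv]
  split_ifs with h
  · have := hle (y i - x i).toNat; omega
  · have := hle (x i - y i).toNat; omega

lemma sub_Mv (x y : Fin n → ℤ) (φ : ℕ → ℕ) (hle : ∀ t, φ t ≤ t) :
    y - Mv x y φ = x + Mv x y (fun t => t - φ t) := by
  funext i
  simp only [Pi.sub_apply, Pi.add_apply, Mv]
  split_ifs with h
  · have := hle (y i - x i).toNat; omega
  · have := hle (x i - y i).toNat; omega

lemma Mv_congr (x y : Fin n → ℤ) (φ ψ : ℕ → ℕ) (M : ℕ) (hM : normInf (y - x) ≤ M)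
    (hφψ : ∀ t, t ≤ M → φ t = ψ t) : Mv x y φ = Mv x y ψ := by
  funext i
  have hb := abs_le_of_normInf hM i
  simp only [Mv]
  split_ifs with h
  · rw [hφψ _ (by omega)]
  · rw [hφψ _ (by omega)]

lemma Mv_zero (x y : Fin n → ℤ) (φ : ℕ → ℕ) (M : ℕ) (hM : normInf (y - x) ≤ M)
    (hφ : ∀ t, t ≤ M → φ t = 0) : Mv x y φ = 0 := by
  funext i
  have hb := abs_le_of_normInf hM i
  simp only [Mv, Pi.zero_apply]
  split_ifs with h
  · rw [hφ _ (by omega)]; simp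
  · rw [hφ _ (by omega)]; simp

lemma normInf_Mv_le (x y : Fin n → ℤ) (φ : ℕ → ℕ) (M K : ℕ) (hM : normInf (y - x) ≤ M)
    (hb : ∀ t, t ≤ M → φ t ≤ K) : normInf (Mv x y φ) ≤ K := by
  refine normInf_le _ _ fun i => ?_
  have hVi := abs_le_of_normInf hM i
  simp only [Mv]
  split_ifs with h
  · have := hb (y i - x i).toNat (by omega); omega
  · have := hb (x i - y i).toNat (by omega); omega

lemma Mv_pair (x y : Fin n → ℤ) (φ ψ χ : ℕ → ℕ) (hχ : χ 0 = 0) (hle : ∀ t, φ t ≤ ψ t) :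
    Mv (x + Mv x y φ) (x + Mv x y ψ) χ = Mv x y (fun t => χ (ψ t - φ t)) := by
  funext i
  simp only [Mv, Pi.add_apply]
  rcases le_or_gt (x i) (y i) with h | h
  · simp only [if_pos h]
    set V := (y i - x i).toNat with hV
    have hc : x i + (φ V : ℤ) ≤ x i + (ψ V : ℤ) := by have := hle V; omega
    rw [if_pos hc]
    have harg : (x i + (ψ V : ℤ) - (x i + (φ V : ℤ))).toNat = ψ V - φ V := by
      have := hle V; omega
    rw [harg]
  · simp only [if_neg (not_le.mpr h)]
    set V := (x i - y i).toNat with hV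
    by_cases he : ψ V = φ V
    · have hc : x i + -(φ V : ℤ) ≤ x i + -(ψ V : ℤ) := by omega
      rw [if_pos hc]
      have harg : (x i + -(ψ V : ℤ) - (x i + -(φ V : ℤ))).toNat = 0 := by omega
      rw [harg, hχ]
      have harg2 : ψ V - φ V = 0 := by omega
      rw [harg2, hχ]
      simp
    · have hlt : φ V < ψ V := by have := hle V; omega
      have hc : ¬ (x i + -(φ V : ℤ) ≤ x i + -(ψ V : ℤ)) := by omega
      rw [if_neg hc]
      have harg : (x i + -(φ V : ℤ) - (x i + -(ψ V : ℤ))).toNat = ψ V - φ V := by omega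
      rw [harg]

lemma Mv_pair0 (x y : Fin n → ℤ) (ψ χ : ℕ → ℕ) (hχ : χ 0 = 0) :
    Mv x (x + Mv x y ψ) χ = Mv x y (fun t => χ (ψ t)) := by
  funext i
  simp only [Mv, Pi.add_apply]
  rcases le_or_gt (x i) (y i) with h | h
  · simp only [if_pos h]
    set V := (y i - x i).toNat with hV
    have hc : x i ≤ x i + (ψ V : ℤ) := by omega
    rw [if_pos hc]
    have harg : (x i + (ψ V : ℤ) - x i).toNat = ψ V := by omega
    rw [harg]
  · simp only [if_neg (not_le.mpr h)]
    set V := (x i - y i).toNat with hV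
    by_cases he : ψ V = 0
    · have hc : x i ≤ x i + -(ψ V : ℤ) := by omega
      rw [if_pos hc]
      have harg : (x i + -(ψ V : ℤ) - x i).toNat = 0 := by omega
      rw [harg, hχ, he, hχ]
      simp
    · have hc : ¬ (x i ≤ x i + -(ψ V : ℤ)) := by omega
      rw [if_neg hc]
      have harg : (x i - (x i + -(ψ V : ℤ))).toNat = ψ V := by omega
      rw [harg]

lemma Mv_swap (x y : Fin n → ℤ) (φ : ℕ → ℕ) (hφ : φ 0 = 0) : Mv y x φ = -Mv x y φ := by
  funext i
  simp only [Mv, Pi.neg_apply]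
  rcases lt_trichotomy (x i) (y i) with h | h | h
  · rw [if_neg (by omega), if_pos h.le]
  · rw [if_pos h.ge, if_pos h.le, h]
    have h0 : (y i - y i).toNat = 0 := by omega
    rw [h0, hφ]
    simp
  · rw [if_pos h.le, if_neg (by omega)]
    simp

/-! ### dmu and chi via Mv -/

lemma half (c : ℤ) : ∃ q r : ℤ, c = 2 * q + r ∧ (r = 0 ∨ r = 1) ∧
    ⌊(c : ℚ) / 2⌋ = q ∧ ⌈(c : ℚ) / 2⌉ = q + r := by
  set q := ⌊(c : ℚ) / 2⌋ with hq
  have h1 : (q : ℚ) ≤ (c : ℚ) / 2 := Int.floor_le _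
  have h2 : (c : ℚ) / 2 < q + 1 := Int.lt_floor_add_one _
  have h1' : 2 * q ≤ c := by
    have hq2 := (le_div_iff₀ (by norm_num : (0:ℚ) < 2)).mp h1
    have : ((2 * q : ℤ) : ℚ) ≤ ((c : ℤ) : ℚ) := by push_cast; linarith
    exact_mod_cast this
  have h2' : c < 2 * q + 2 := by
    have hq2 := (div_lt_iff₀ (by norm_num : (0:ℚ) < 2)).mp h2
    have : ((c : ℤ) : ℚ) < ((2 * q + 2 : ℤ) : ℚ) := by push_cast; linarith
    exact_mod_cast this
  refine ⟨q, c - 2 * q, by ring, by omega, rfl, ?_⟩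
  rw [Int.ceil_eq_iff]
  constructor
  · push_cast
    rw [lt_div_iff₀ (by norm_num : (0:ℚ) < 2)]
    push_cast
    have : (2 * q : ℚ) ≤ (c : ℚ) := by exact_mod_cast h1'
    linarith
  · push_cast
    rw [div_le_iff₀ (by norm_num : (0:ℚ) < 2)]
    push_cast
    have : (c : ℚ) < 2 * q + 2 := by exact_mod_cast h2'
    linarith

lemma dmu_eq (x y : Fin n → ℤ) : dmu x y = x + Mv x y (fun t => t / 2) := by
  funext i
  simp only [dmu, Pi.add_apply, Mv]
  obtain ⟨q, r, hc, hr, hf, hcl⟩ := half (x i + y i)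
  rcases le_or_gt (y i) (x i) with h | h
  · rw [if_pos h, hcl]
    by_cases h2 : x i ≤ y i
    · rw [if_pos h2]
      have hxy : x i = y i := le_antisymm h2 h
      omega
    · rw [if_neg h2]
      omega
  · rw [if_neg (not_le.mpr h), hf, if_pos h.le]
    omega

lemma dmu_eq' (x y : Fin n → ℤ) : dmu y x = y - Mv x y (fun t => t / 2) := by
  rw [dmu_eq y x]
  rw [Mv_swap x y (fun t => t / 2) (by norm_num)]
  funext i
  simp only [Pi.add_apply, Pi.sub_apply, Pi.neg_apply]
  ring

lemma chi_eq_Mv (x y : Fin n → ℤ) (k : ℕ) (hk : 1 ≤ k) :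
    chi x y k = Mv x y (fun t => if k ≤ t then 1 else 0) := by
  funext i
  simp only [chi, Mv]
  rcases le_or_gt (x i) (y i) with h | h
  · rw [if_pos h]
    split_ifs <;> omega
  · rw [if_neg (not_le.mpr h)]
    split_ifs <;> omega

lemma chi_zero (x y : Fin n → ℤ) (h0 : normInf (y - x) = 0) : chi x y 0 = 0 := by
  funext i
  have := abs_le_of_normInf (le_of_eq h0) i
  simp only [chi, Pi.zero_apply]
  split_ifs <;> omega

lemma cap_card (J : Finset ℕ) : IsCap (fun t => (J ∩ Finset.Icc 1 t).card) := by
  constructor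
  · simp
  · intro t
    constructor
    · exact Finset.card_le_card (Finset.inter_subset_inter (Finset.Subset.refl J)
        (Finset.Icc_subset_Icc_right (Nat.le_succ t)))
    · have hsub : J ∩ Finset.Icc 1 (t + 1) ⊆ insert (t + 1) (J ∩ Finset.Icc 1 t) := by
        intro k hk
        simp only [Finset.mem_inter, Finset.mem_Icc, Finset.mem_insert] at hk ⊢
        rcases hk with ⟨hkJ, hk1, hk2⟩
        by_cases hke : k = t + 1
        · exact Or.inl hke
        · exact Or.inr ⟨hkJ, hk1, by omega⟩
      calc (J ∩ Finset.Icc 1 (t + 1)).card ≤ (insert (t + 1) (J ∩ Finset.Icc 1 t)).card :=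
            Finset.card_le_card hsub
        _ ≤ (J ∩ Finset.Icc 1 t).card + 1 := Finset.card_insert_le _ _

lemma chi_sum (x y : Fin n → ℤ) (J : Finset ℕ) (hJ : ∀ k ∈ J, 1 ≤ k) :
    ∑ k ∈ J, chi x y k = Mv x y (fun t => (J ∩ Finset.Icc 1 t).card) := by
  funext i
  rw [Finset.sum_apply]
  simp only [chi, Mv]
  rcases le_or_gt (x i) (y i) with h | h
  · rw [if_pos h]
    set V := (y i - x i).toNat with hV
    have hsum : ∀ k ∈ J, ((if (k : ℤ) ≤ y i - x i then 1 else 0) -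
        (if y i - x i ≤ -(k : ℤ) then 1 else 0) : ℤ) = if k ∈ Finset.Icc 1 V then 1 else 0 := by
      intro k hk
      have := hJ k hk
      simp only [Finset.mem_Icc]
      split_ifs <;> omega
    rw [Finset.sum_congr rfl hsum]
    rw [Finset.sum_ite_mem]
    simp [Finset.sum_const]
  · rw [if_neg (not_le.mpr h)]
    set V := (x i - y i).toNat with hV
    have hsum : ∀ k ∈ J, ((if (k : ℤ) ≤ y i - x i then 1 else 0) -
        (if y i - x i ≤ -(k : ℤ) then 1 else 0) : ℤ) = -(if k ∈ Finset.Icc 1 V then 1 else 0) := by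
      intro k hk
      have := hJ k hk
      simp only [Finset.mem_Icc]
      split_ifs <;> omega
    rw [Finset.sum_congr rfl hsum]
    rw [Finset.sum_neg_distrib]
    rw [Finset.sum_ite_mem]
    simp [Finset.sum_const]

/-! ### more point lemmas -/

lemma sub_pt (x y : Fin n → ℤ) (φ : ℕ → ℕ) (hle : ∀ t, φ t ≤ t) :
    y - (x + Mv x y φ) = Mv x y (fun t => t - φ t) := by
  funext i
  simp only [Pi.sub_apply, Pi.add_apply, Mv]
  split_ifs with h
  · have := hle (y i - x i).toNat; omega
  · have := hle (x i - y i).toNat; omega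

lemma pt_sub_pt (x y : Fin n → ℤ) (φ ψ : ℕ → ℕ) (hle : ∀ t, φ t ≤ ψ t) :
    (x + Mv x y ψ) - (x + Mv x y φ) = Mv x y (fun t => ψ t - φ t) := by
  funext i
  simp only [Pi.sub_apply, Pi.add_apply, Mv]
  split_ifs with h
  · have := hle (y i - x i).toNat; omega
  · have := hle (x i - y i).toNat; omega

lemma pt_add (x y : Fin n → ℤ) (φ ψ : ℕ → ℕ) :
    (x + Mv x y φ) + Mv x y ψ = x + Mv x y (fun t => φ t + ψ t) := by
  funext i
  simp only [Pi.add_apply, Mv]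
  split_ifs with h <;> push_cast <;> ring

lemma pt_sub_mv (x y : Fin n → ℤ) (φ ψ : ℕ → ℕ) (hle : ∀ t, ψ t ≤ φ t) :
    (x + Mv x y φ) - Mv x y ψ = x + Mv x y (fun t => φ t - ψ t) := by
  funext i
  simp only [Pi.sub_apply, Pi.add_apply, Mv]
  split_ifs with h
  · have := hle (y i - x i).toNat; omega
  · have := hle (x i - y i).toNat; omega

/-! ### The EReal combination -/

lemma combine3 {fx fy fu fuQ fyQ fxP' fT1 fT2 : EReal}
    (h1 : fuQ + fyQ ≤ fu + fy) (h2 : fT1 + fxP' ≤ fx + fuQ) (h3 : fT2 + fu ≤ fxP' + fyQ)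
    (bx : fx ≠ ⊥) (by' : fy ≠ ⊥) (bu : fu ≠ ⊥) (buQ : fuQ ≠ ⊥) (byQ : fyQ ≠ ⊥)
    (bxP' : fxP' ≠ ⊥) (bT1 : fT1 ≠ ⊥) (bT2 : fT2 ≠ ⊥)
    (tx : fx ≠ ⊤) (ty : fy ≠ ⊤) (tu : fu ≠ ⊤) (tuQ : fuQ ≠ ⊤) (tyQ : fyQ ≠ ⊤)
    (txP' : fxP' ≠ ⊤) :
    fT1 + fT2 ≤ fx + fy := by
  have tT1 : fT1 ≠ ⊤ := (fin_of_le h2 bT1 bxP' tx tuQ).1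
  have tT2 : fT2 ≠ ⊤ := (fin_of_le h3 bT2 bu txP' tyQ).1
  obtain ⟨rx, hrx⟩ := exists_real tx bx
  obtain ⟨ry, hry⟩ := exists_real ty by'
  obtain ⟨ru, hru⟩ := exists_real tu bu
  obtain ⟨ruQ, hruQ⟩ := exists_real tuQ buQ
  obtain ⟨ryQ, hryQ⟩ := exists_real tyQ byQ
  obtain ⟨rxP', hrxP'⟩ := exists_real txP' bxP'
  obtain ⟨rT1, hrT1⟩ := exists_real tT1 bT1
  obtain ⟨rT2, hrT2⟩ := exists_real tT2 bT2
  simp only [hrx, hry, hru, hruQ, hryQ, hrxP', hrT1, hrT2] at h1 h2 h3 ⊢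
  have h1' : ruQ + ryQ ≤ ru + ry := by exact_mod_cast h1
  have h2' : rT1 + rxP' ≤ rx + ruQ := by exact_mod_cast h2
  have h3' : rT2 + ru ≤ rxP' + ryQ := by exact_mod_cast h3
  have : rT1 + rT2 ≤ rx + ry := by linarith
  exact_mod_cast this

/-! ### The generic scheme -/

lemma scheme {n : ℕ} (f : (Fin n → ℤ) → EReal) (hbot : ∀ x, f x ≠ ⊥) (M : ℕ) (hM3 : 3 ≤ M)
    (IH : ∀ x y : Fin n → ℤ, normInf (y - x) ≤ M - 1 → f x ≠ ⊤ → f y ≠ ⊤ →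
      ∀ h : ℕ → ℕ, IsCap h → f (x + Mv x y h) + f (y - Mv x y h) ≤ f x + f y)
    (x y : Fin n → ℤ) (hxy : normInf (y - x) ≤ M) (hx : f x ≠ ⊤) (hy : f y ≠ ⊤)
    (e' g' h1 h2 h : ℕ → ℕ) (ce : IsCap e') (cg : IsCap g') (c1 : IsCap h1) (c2 : IsCap h2)
    (ch : IsCap h) (He : ∀ t, e' t + g' t = t) (Hs : ∀ t, h t = h1 (e' t) + h2 (g' t))
    (Hu : f (x + Mv x y e') ≠ ⊤)
    (Hg1 : 1 ≤ g' M) (HgM : g' M + 1 ≤ M)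
    (CC1 : e' M + h2 (g' M) + 1 ≤ M)
    (CC2 : h1 (e' M) + g' M + 1 ≤ M + h2 (g' M)) :
    f (x + Mv x y h) + f (y - Mv x y h) ≤ f x + f y := by
  have he'le : ∀ t, e' t ≤ t := ce.le_self
  have hg'le : ∀ t, g' t ≤ t := cg.le_self
  have hyeq : y = x + Mv x y (fun t => t) := (Mv_id x y).symm
  -- (β) : pair (u, y), move h2 ∘ g'
  have hβd : normInf (y - (x + Mv x y e')) ≤ M - 1 := by
    rw [sub_pt x y e' he'le]
    refine normInf_Mv_le x y _ M (M - 1) hxy fun t ht => ?_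
    have hm := cg.mono ht
    have ht1 := He t; have ht2 := He M
    omega
  have hβ := IH (x + Mv x y e') y hβd Hu hy h2 c2
  have hmv1 : Mv (x + Mv x y e') (x + Mv x y (fun t => t)) h2
      = Mv x y (fun t => h2 (t - e' t)) := Mv_pair x y e' (fun t => t) h2 c2.1 he'le
  rw [← hyeq] at hmv1
  rw [hmv1, pt_add x y e' (fun t => h2 (t - e' t)),
    sub_Mv x y (fun t => h2 (t - e' t)) (fun t => le_trans (c2.le_self _) (by omega))] at hβ
  have hA1eq : (fun t => e' t + h2 (t - e' t)) = (fun t => e' t + h2 (g' t)) := by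
    funext t; have := He t
    rw [show t - e' t = g' t from by omega]
  have hA2eq : (fun t => t - h2 (t - e' t)) = (fun t => t - h2 (g' t)) := by
    funext t; have := He t
    rw [show t - e' t = g' t from by omega]
  rw [hA1eq, hA2eq] at hβ
  -- hβ : f (x + Mv A1) + f (x + Mv A2) ≤ f (x + Mv e') + f y
  obtain ⟨hf_uQ, hf_yQ⟩ := fin_of_le hβ (hbot _) (hbot _) Hu hy
  -- (α) : pair (x, u), move h1
  have hαd : normInf ((x + Mv x y e') - x) ≤ M - 1 := by
    rw [add_sub_cancel_left]
    refine normInf_Mv_le x y _ M (M - 1) hxy fun t ht => ?_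
    have hm := ce.mono ht
    have ht2 := He M
    omega
  have hα := IH x (x + Mv x y e') hαd hx Hu h1 c1
  rw [Mv_pair0 x y e' h1 c1.1,
    pt_sub_mv x y e' (fun t => h1 (e' t)) (fun t => c1.le_self _)] at hα
  obtain ⟨hf_xP, hf_xP'⟩ := fin_of_le hα (hbot _) (hbot _) hx Hu
  -- (p1) : pair (x, uQ), move h via reparam
  have cγ : IsCap (fun t => e' t + h2 (g' t)) := by
    refine ⟨?_, fun t => ?_⟩
    · show e' 0 + h2 (g' 0) = 0
      rw [ce.1, cg.1, c2.1]
    · dsimp only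
      have hee := ce.2 t; have hgg := cg.2 t
      have hHe1 := He t; have hHe2 := He (t + 1)
      rcases (by omega : g' (t + 1) = g' t ∨ g' (t + 1) = g' t + 1) with hcase | hcase
      · rw [hcase]; omega
      · rw [hcase]
        have hsl := c2.2 (g' t)
        omega
  have hcondA : ∀ t, e' (t + 1) + h2 (g' (t + 1)) = e' t + h2 (g' t) → h (t + 1) = h t := by
    intro t heq
    have hs1 := Hs t; have hs2 := Hs (t + 1)
    have hee := ce.2 t; have hgg := cg.2 t
    have hHe1 := He t; have hHe2 := He (t + 1)
    rcases (by omega : g' (t + 1) = g' t ∨ g' (t + 1) = g' t + 1) with hcase | hcase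
    · have he2 : e' (t + 1) = e' t := by
        rw [hcase] at heq; omega
      rw [he2, hcase] at hs2
      omega
    · have he2 : e' (t + 1) = e' t := by omega
      rw [he2, hcase] at hs2 heq
      omega
  obtain ⟨ψA, cA, hAeq⟩ := reparam (fun t => e' t + h2 (g' t)) h cγ ch hcondA M
  have hp1d : normInf ((x + Mv x y (fun t => e' t + h2 (g' t))) - x) ≤ M - 1 := by
    rw [add_sub_cancel_left]
    refine normInf_Mv_le x y _ M (M - 1) hxy fun t ht => ?_
    have m1 := ce.mono ht
    have m2 := c2.mono (cg.mono ht)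
    omega
  have hp1 := IH x (x + Mv x y (fun t => e' t + h2 (g' t))) hp1d hx hf_uQ ψA cA
  rw [Mv_pair0 x y (fun t => e' t + h2 (g' t)) ψA cA.1] at hp1
  rw [Mv_congr x y (fun t => ψA (e' t + h2 (g' t))) h M hxy (fun t ht => hAeq t ht)] at hp1
  rw [pt_sub_mv x y (fun t => e' t + h2 (g' t)) h
    (fun t => by show h t ≤ e' t + h2 (g' t); have := Hs t; have := c1.le_self (e' t); omega)] at hp1
  have hA3eq : (fun t => (e' t + h2 (g' t)) - h t) = (fun t => e' t - h1 (e' t)) := by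
    funext t
    have := Hs t; have := c1.le_self (e' t); have := c2.le_self (g' t)
    omega
  rw [hA3eq] at hp1
  -- hp1 : f (x + Mv h) + f (x + Mv A3) ≤ f x + f (x + Mv A1)
  -- (p2) : pair (xP', yQ), move ρ via reparam
  have cδ : IsCap (fun t => h1 (e' t) + (g' t - h2 (g' t))) := by
    refine ⟨?_, fun t => ?_⟩
    · show h1 (e' 0) + (g' 0 - h2 (g' 0)) = 0
      rw [ce.1, cg.1, c1.1, c2.1]
    · dsimp only
      have hee := ce.2 t; have hgg := cg.2 t
      have hHe1 := He t; have hHe2 := He (t + 1)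
      have hle2 := c2.le_self (g' t)
      rcases (by omega : g' (t + 1) = g' t ∨ g' (t + 1) = g' t + 1) with hcase | hcase
      · have he2 : e' (t + 1) = e' t + 1 ∨ e' (t + 1) = e' t := by omega
        rcases he2 with he2 | he2 <;> rw [hcase, he2]
        · have hsl := c1.2 (e' t); omega
        · omega
      · have he2 : e' (t + 1) = e' t := by omega
        rw [hcase, he2]
        have hsl := c2.2 (g' t)
        have hle3 := c2.le_self (g' t + 1)
        omega
  have cρ : IsCap (fun t => g' t - h2 (g' t)) := by
    refine ⟨?_, fun t => ?_⟩
    · show g' 0 - h2 (g' 0) = 0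
      rw [cg.1, c2.1]
    · dsimp only
      have hgg := cg.2 t
      have hle2 := c2.le_self (g' t)
      rcases (by omega : g' (t + 1) = g' t ∨ g' (t + 1) = g' t + 1) with hcase | hcase
      · rw [hcase]; omega
      · rw [hcase]
        have hsl := c2.2 (g' t)
        have hle3 := c2.le_self (g' t + 1)
        omega
  have hcondB : ∀ t, h1 (e' (t + 1)) + (g' (t + 1) - h2 (g' (t + 1)))
      = h1 (e' t) + (g' t - h2 (g' t)) → g' (t + 1) - h2 (g' (t + 1)) = g' t - h2 (g' t) := by
    intro t heq
    have hee := ce.2 t; have hgg := cg.2 t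
    have hHe1 := He t; have hHe2 := He (t + 1)
    have hle2 := c2.le_self (g' t)
    rcases (by omega : g' (t + 1) = g' t ∨ g' (t + 1) = g' t + 1) with hcase | hcase
    · rw [hcase]
    · have he2 : e' (t + 1) = e' t := by omega
      rw [he2, hcase] at heq
      rw [hcase]
      have hsl := c2.2 (g' t)
      have hle3 := c2.le_self (g' t + 1)
      omega
  obtain ⟨ψB, cB, hBeq⟩ := reparam (fun t => h1 (e' t) + (g' t - h2 (g' t)))
    (fun t => g' t - h2 (g' t)) cδ cρ hcondB M
  have hA3leA2 : ∀ t, e' t - h1 (e' t) ≤ t - h2 (g' t) := by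
    intro t
    have := He t; have := c2.le_self (g' t); have := he'le t
    omega
  have hp2d : normInf ((x + Mv x y (fun t => t - h2 (g' t)))
      - (x + Mv x y (fun t => e' t - h1 (e' t)))) ≤ M - 1 := by
    rw [pt_sub_pt x y (fun t => e' t - h1 (e' t)) (fun t => t - h2 (g' t)) hA3leA2]
    refine normInf_Mv_le x y _ M (M - 1) hxy fun t ht => ?_
    have m1 := c1.mono (ce.mono ht)
    have m4 : g' t - h2 (g' t) ≤ g' M - h2 (g' M) := c2.compl.mono (cg.mono ht)
    have hHe1 := He t; have hHe2 := He M
    have := c2.le_self (g' t); have := c2.le_self (g' M)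
    have := c1.le_self (e' t); have := he'le t
    omega
  have hp2 := IH (x + Mv x y (fun t => e' t - h1 (e' t)))
    (x + Mv x y (fun t => t - h2 (g' t))) hp2d hf_xP' hf_yQ ψB cB
  have hmv2 : Mv (x + Mv x y (fun t => e' t - h1 (e' t)))
      (x + Mv x y (fun t => t - h2 (g' t))) ψB
      = Mv x y (fun t => ψB ((t - h2 (g' t)) - (e' t - h1 (e' t)))) :=
    Mv_pair x y (fun t => e' t - h1 (e' t)) (fun t => t - h2 (g' t)) ψB cB.1 hA3leA2
  rw [hmv2] at hp2
  have hδarg : (fun t => ψB ((t - h2 (g' t)) - (e' t - h1 (e' t))))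
      = (fun t => ψB (h1 (e' t) + (g' t - h2 (g' t)))) := by
    funext t
    have := He t; have := c2.le_self (g' t); have := c1.le_self (e' t); have := he'le t
    congr 1
    omega
  rw [hδarg] at hp2
  rw [Mv_congr x y (fun t => ψB (h1 (e' t) + (g' t - h2 (g' t))))
    (fun t => g' t - h2 (g' t)) M hxy (fun t ht => hBeq t ht)] at hp2
  rw [pt_add x y (fun t => e' t - h1 (e' t)) (fun t => g' t - h2 (g' t))] at hp2
  have hA5eq : (fun t => (e' t - h1 (e' t)) + (g' t - h2 (g' t))) = (fun t => t - h t) := by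
    funext t
    have := Hs t; have := He t
    have := c1.le_self (e' t); have := c2.le_self (g' t)
    omega
  rw [hA5eq] at hp2
  rw [pt_sub_mv x y (fun t => t - h2 (g' t)) (fun t => g' t - h2 (g' t))
    (fun t => by show g' t - h2 (g' t) ≤ t - h2 (g' t); have := He t; have := c2.le_self (g' t); omega)] at hp2
  have hueq2 : (fun t => (t - h2 (g' t)) - (g' t - h2 (g' t))) = e' := by
    funext t
    have := He t; have := c2.le_self (g' t)
    omega
  rw [hueq2] at hp2
  -- hp2 : f (x + Mv (id - h)) + f (x + Mv e') ≤ f (x + Mv A3) + f (x + Mv A2)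
  rw [sub_Mv x y h ch.le_self]
  exact combine3 hβ hp1 hp2 (hbot x) (hbot y) (hbot _) (hbot _) (hbot _) (hbot _)
    (hbot _) (hbot _) hx hy Hu hf_uQ hf_yQ hf_xP'

/-! ### Splitting a cap into even and odd parts -/

def split1 (h : ℕ → ℕ) : ℕ → ℕ := fun r => ∑ j ∈ Finset.range r, (h (2 * j + 2) - h (2 * j + 1))
def split2 (h : ℕ → ℕ) : ℕ → ℕ := fun r => ∑ j ∈ Finset.range r, (h (2 * j + 1) - h (2 * j))

lemma split_spec {h : ℕ → ℕ} (ch : IsCap h) :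
    ∀ r, split1 h r + split2 h r = h (2 * r) ∧ split1 h r + split2 h (r + 1) = h (2 * r + 1) := by
  intro r
  induction r with
  | zero =>
    have e0 : split2 h 1 = h 1 - h 0 := by
      simp [split2, Finset.sum_range_one]
    have e1 : split1 h 0 = 0 := by simp [split1]
    have e2 : split2 h 0 = 0 := by simp [split2]
    have h0 := ch.1
    constructor
    · rw [show 2 * 0 = 0 from rfl, e1, e2, h0]
    · have hgoal : split1 h 0 + split2 h 1 = h 1 := by
        rw [e1, e0]; have := (ch.2 0).1; omega
      simpa using hgoal
  | succ r ih =>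
    have e1 : split1 h (r + 1) = split1 h r + (h (2 * r + 2) - h (2 * r + 1)) :=
      Finset.sum_range_succ _ _
    have e2 : split2 h (r + 1) = split2 h r + (h (2 * r + 1) - h (2 * r)) :=
      Finset.sum_range_succ _ _
    have e3 : split2 h (r + 1 + 1) = split2 h (r + 1) + (h (2 * (r + 1) + 1) - h (2 * (r + 1))) :=
      Finset.sum_range_succ _ _
    rw [show 2 * (r + 1) = 2 * r + 2 from by ring] at e3
    rw [show 2 * (r + 1) = 2 * r + 2 from by ring, show 2 * r + 2 + 1 = 2 * r + 3 from by ring]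
    rw [show 2 * r + 2 + 1 = 2 * r + 3 from by ring] at e3
    have s1 := (ch.2 (2 * r)).1; have s2 := (ch.2 (2 * r)).2
    have s3 := (ch.2 (2 * r + 1)).1; have s4 := (ch.2 (2 * r + 1)).2
    have s5 := (ch.2 (2 * r + 2)).1; have s6 := (ch.2 (2 * r + 2)).2
    rw [show 2 * r + 1 + 1 = 2 * r + 2 from by ring] at s3 s4
    rw [show 2 * r + 2 + 1 = 2 * r + 3 from by ring] at s5 s6
    constructor <;> omega

lemma split1_cap {h : ℕ → ℕ} (ch : IsCap h) : IsCap (split1 h) := by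
  refine ⟨by simp [split1], fun r => ?_⟩
  have e1 : split1 h (r + 1) = split1 h r + (h (2 * r + 2) - h (2 * r + 1)) :=
    Finset.sum_range_succ _ _
  have s3 := (ch.2 (2 * r + 1)).1; have s4 := (ch.2 (2 * r + 1)).2
  rw [show 2 * r + 1 + 1 = 2 * r + 2 from by ring] at s3 s4
  omega

lemma split2_cap {h : ℕ → ℕ} (ch : IsCap h) : IsCap (split2 h) := by
  refine ⟨by simp [split2], fun r => ?_⟩
  have e1 : split2 h (r + 1) = split2 h r + (h (2 * r + 1) - h (2 * r)) :=
    Finset.sum_range_succ _ _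
  have s1 := (ch.2 (2 * r)).1; have s2 := (ch.2 (2 * r)).2
  omega

lemma split_eq {h : ℕ → ℕ} (ch : IsCap h) (t : ℕ) :
    h t = split1 h (t / 2) + split2 h (t - t / 2) := by
  obtain ⟨r, hr⟩ : ∃ r, t = 2 * r ∨ t = 2 * r + 1 := ⟨t / 2, by omega⟩
  rcases hr with hr | hr <;> subst hr
  · have hs := (split_spec ch r).1
    rw [show 2 * r - 2 * r / 2 = r from by omega, show 2 * r / 2 = r from by omega]
    omega
  · have hs := (split_spec ch r).2
    rw [show (2 * r + 1) - (2 * r + 1) / 2 = r + 1 from by omega,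
      show (2 * r + 1) / 2 = r from by omega]
    omega

/-! ### The master lemma: (2) implies the cap-move inequality -/

lemma dmu_small {n : ℕ} {x y : Fin n → ℤ} (hK : normInf (y - x) ≤ 1) :
    dmu x y = x ∧ dmu y x = y := by
  constructor
  · rw [dmu_eq, Mv_zero x y _ 1 hK (fun t ht => by (try dsimp only); interval_cases t <;> rfl)]
    simp
  · rw [dmu_eq', Mv_zero x y _ 1 hK (fun t ht => by (try dsimp only); interval_cases t <;> rfl)]
    simp

lemma base_small {n : ℕ} (f : (Fin n → ℤ) → EReal)
    (H2 : ∀ x y : Fin n → ℤ, normInf (x - y) = 2 → f (dmu x y) + f (dmu y x) ≤ f x + f y)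
    (x y : Fin n → ℤ) (hK : normInf (y - x) ≤ 2) (h : ℕ → ℕ) (ch : IsCap h) :
    f (x + Mv x y h) + f (y - Mv x y h) ≤ f x + f y := by
  have hdd : f (dmu x y) + f (dmu y x) ≤ f x + f y := by
    by_cases hKK : normInf (y - x) = 2
    · exact H2 x y (by rw [normInf_sub_comm]; exact hKK)
    · have hsm := dmu_small (show normInf (y - x) ≤ 1 by omega)
      rw [hsm.1, hsm.2]
  have h0 : h 0 = 0 := ch.1
  have h1a : h 0 ≤ h 1 := (ch.2 0).1
  have h1b : h 1 ≤ h 0 + 1 := (ch.2 0).2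
  have h2a : h 1 ≤ h 2 := (ch.2 1).1
  have h2b : h 2 ≤ h 1 + 1 := (ch.2 1).2
  rw [h0] at h1b
  by_cases c1 : h 1 = 0
  · by_cases c2 : h 2 = 0
    · rw [Mv_zero x y h 2 hK (fun t ht => by (try dsimp only); interval_cases t <;> omega)]
      simp
    · -- h = (0,0,1) on [0,2]
      rw [Mv_congr x y h (fun t => t / 2) 2 hK
        (fun t ht => by (try dsimp only); interval_cases t <;> omega)]
      rw [← dmu_eq, ← dmu_eq']
      exact hdd
  · -- h 1 = 1
    by_cases c2 : h 2 = 1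
    · -- h = (0,1,1): complementary to (0,0,1)
      have hxx : x + Mv x y h = y - Mv x y (fun t => t / 2) := by
        rw [sub_Mv x y (fun t => t / 2) (fun t => by show t / 2 ≤ t; omega)]
        rw [Mv_congr x y h (fun t => t - t / 2) 2 hK
          (fun t ht => by (try dsimp only); interval_cases t <;> omega)]
      have hyy : y - Mv x y h = x + Mv x y (fun t => t / 2) := by
        rw [sub_Mv x y h ch.le_self]
        rw [Mv_congr x y (fun t => t - h t) (fun t => t / 2) 2 hK
          (fun t ht => by (try dsimp only); interval_cases t <;> omega)]
      rw [hxx, hyy, ← dmu_eq, ← dmu_eq', add_comm]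
      exact hdd
    · -- h = (0,1,2) = id on [0,2]
      have hxx : x + Mv x y h = y := by
        rw [Mv_congr x y h (fun t => t) 2 hK (fun t ht => by (try dsimp only); interval_cases t <;> omega)]
        exact Mv_id x y
      have hyy : y - Mv x y h = x := by
        rw [sub_Mv x y h ch.le_self]
        rw [Mv_zero x y (fun t => t - h t) 2 hK (fun t ht => by (try dsimp only); interval_cases t <;> omega)]
        simp
      rw [hxx, hyy, add_comm]

lemma master {n : ℕ} (f : (Fin n → ℤ) → EReal) (hbot : ∀ x, f x ≠ ⊥)
    (Hdom : DDMConvexSet {x : Fin n → ℤ | f x ≠ ⊤})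
    (H2 : ∀ x y : Fin n → ℤ, normInf (x - y) = 2 → f (dmu x y) + f (dmu y x) ≤ f x + f y) :
    ∀ M : ℕ, ∀ x y : Fin n → ℤ, normInf (y - x) ≤ M → f x ≠ ⊤ → f y ≠ ⊤ →
      ∀ h : ℕ → ℕ, IsCap h → f (x + Mv x y h) + f (y - Mv x y h) ≤ f x + f y := by
  intro M
  induction M using Nat.strong_induction_on with
  | _ M IH =>
  intro x y hxy hx hy h ch
  by_cases hK2 : normInf (y - x) ≤ 2
  · exact base_small f H2 x y hK2 h ch
  · push_neg at hK2
    set K := normInf (y - x) with hKdef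
    have hK3 : 3 ≤ K := hK2
    have hxyK : normInf (y - x) ≤ K := le_rfl
    have hKM : K ≤ M := by rw [hKdef]; exact hxy
    have IHs : ∀ x' y' : Fin n → ℤ, normInf (y' - x') ≤ K - 1 → f x' ≠ ⊤ → f y' ≠ ⊤ →
        ∀ h' : ℕ → ℕ, IsCap h' → f (x' + Mv x' y' h') + f (y' - Mv x' y' h') ≤ f x' + f y' :=
      fun x' y' hd => IH (K - 1) (by omega) x' y' hd
    have cef : IsCap (fun t => t / 2) :=
      ⟨rfl, fun t => ⟨by show t / 2 ≤ (t + 1) / 2; omega, by show (t + 1) / 2 ≤ t / 2 + 1; omega⟩⟩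
    have cgf : IsCap (fun t => t - t / 2) := cef.compl
    have He : ∀ t, t / 2 + (t - t / 2) = t := fun t => by omega
    have hu : f (x + Mv x y (fun t => t / 2)) ≠ ⊤ := by
      have := (Hdom x hx y hy).1
      rwa [dmu_eq] at this
    have hw : f (x + Mv x y (fun t => t - t / 2)) ≠ ⊤ := by
      have := (Hdom x hx y hy).2
      rwa [dmu_eq', sub_Mv x y (fun t => t / 2) (fun t => by show t / 2 ≤ t; omega)] at this
    have c1c : IsCap (split1 h) := split1_cap ch
    have c2c : IsCap (split2 h) := split2_cap ch
    have HsU : ∀ t, h t = split1 h (t / 2) + split2 h (t - t / 2) := split_eq ch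
    have haa : split1 h (K / 2) ≤ K / 2 := c1c.le_self _
    have hbb : split2 h (K - K / 2) ≤ K - K / 2 := c2c.le_self _
    -- the midpoint inequality
    have Hmid : f (x + Mv x y (fun t => t / 2)) + f (y - Mv x y (fun t => t / 2))
        ≤ f x + f y := by
      have cchi : IsCap (fun t => if K ≤ t then 1 else 0) := by
        refine ⟨?_, fun t => ?_⟩
        · show (if K ≤ 0 then 1 else 0) = 0
          rw [if_neg (by omega)]
        · dsimp only
          split_ifs <;> omega
      have hchile : ∀ t, (if K ≤ t then 1 else 0) ≤ t := by
        intro t; split_ifs <;> omega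
      have Hchi : f (x + Mv x y (fun t => if K ≤ t then 1 else 0))
          + f (y - Mv x y (fun t => if K ≤ t then 1 else 0)) ≤ f x + f y := by
        rcases Nat.even_or_odd K with ⟨A2, hA2⟩ | ⟨A2, hA2⟩
        · -- K even
          have hKmod : K % 2 = 0 := by omega
          refine scheme f hbot K hK3 IHs x y hxyK hx hy (fun t => t / 2) (fun t => t - t / 2)
            (fun r => if K / 2 ≤ r then 1 else 0) (fun r => 0)
            (fun t => if K ≤ t then 1 else 0) cef cgf
            ⟨by show (if K / 2 ≤ 0 then 1 else 0) = 0; rw [if_neg (by omega)],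
              fun t => by dsimp only; split_ifs <;> omega⟩
            ⟨rfl, fun t => ⟨by show (0:ℕ) ≤ 0; omega, by show (0:ℕ) ≤ 0 + 1; omega⟩⟩ cchi He ?_ hu ?_ ?_ ?_ ?_
          · intro t; (try dsimp only); split_ifs <;> omega
          · show 1 ≤ K - K / 2
            omega
          · show (K - K / 2) + 1 ≤ K
            omega
          · show K / 2 + 0 + 1 ≤ K
            omega
          · show (if K / 2 ≤ K / 2 then 1 else 0) + (K - K / 2) + 1 ≤ K + 0
            rw [if_pos le_rfl]
            omega
        · -- K odd
          have hKmod : K % 2 = 1 := by omega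
          refine scheme f hbot K hK3 IHs x y hxyK hx hy (fun t => t / 2) (fun t => t - t / 2)
            (fun r => 0) (fun r => if K - K / 2 ≤ r then 1 else 0)
            (fun t => if K ≤ t then 1 else 0) cef cgf
            ⟨rfl, fun t => ⟨by show (0:ℕ) ≤ 0; omega, by show (0:ℕ) ≤ 0 + 1; omega⟩⟩
            ⟨by show (if K - K / 2 ≤ 0 then 1 else 0) = 0; rw [if_neg (by omega)],
              fun t => by dsimp only; split_ifs <;> omega⟩
            cchi He ?_ hu ?_ ?_ ?_ ?_
          · intro t; (try dsimp only); split_ifs <;> omega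
          · show 1 ≤ K - K / 2
            omega
          · show (K - K / 2) + 1 ≤ K
            omega
          · show K / 2 + (if K - K / 2 ≤ K - K / 2 then 1 else 0) + 1 ≤ K
            rw [if_pos le_rfl]
            omega
          · show 0 + (K - K / 2) + 1 ≤ K + (if K - K / 2 ≤ K - K / 2 then 1 else 0)
            rw [if_pos le_rfl]
            omega
      obtain ⟨hfx2, hfy2⟩ := fin_of_le Hchi (hbot _) (hbot _) hx hy
      have hchile2 : ∀ t, (if K ≤ t then 1 else 0) ≤ t - (if K ≤ t then 1 else 0) := by
        intro t; split_ifs <;> omega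
      have hd2 : normInf ((y - Mv x y (fun t => if K ≤ t then 1 else 0))
          - (x + Mv x y (fun t => if K ≤ t then 1 else 0))) ≤ K - 1 := by
        rw [sub_Mv x y _ hchile,
          pt_sub_pt x y (fun t => if K ≤ t then 1 else 0)
            (fun t => t - (if K ≤ t then 1 else 0)) hchile2]
        refine normInf_Mv_le x y _ K (K - 1) hxyK fun t ht => ?_
        split_ifs <;> omega
      have hIH2 := IHs (x + Mv x y (fun t => if K ≤ t then 1 else 0))
        (y - Mv x y (fun t => if K ≤ t then 1 else 0)) hd2 hfx2 hfy2 (fun t => t / 2) cef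
      rw [sub_Mv x y (fun t => if K ≤ t then 1 else 0) hchile] at hIH2 Hchi
      rw [Mv_pair x y (fun t => if K ≤ t then 1 else 0)
        (fun t => t - (if K ≤ t then 1 else 0)) (fun t => t / 2) rfl hchile2] at hIH2
      rw [pt_add x y (fun t => if K ≤ t then 1 else 0)
        (fun t => (t - (if K ≤ t then 1 else 0) - (if K ≤ t then 1 else 0)) / 2)] at hIH2
      rw [Mv_congr x y (fun t => (if K ≤ t then 1 else 0)
          + (t - (if K ≤ t then 1 else 0) - (if K ≤ t then 1 else 0)) / 2)
        (fun t => t / 2) K hxyK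
        (fun t ht => by split_ifs <;> omega)] at hIH2
      rw [pt_sub_mv x y (fun t => t - (if K ≤ t then 1 else 0))
        (fun t => (t - (if K ≤ t then 1 else 0) - (if K ≤ t then 1 else 0)) / 2)
        (fun t => by split_ifs <;> omega)] at hIH2
      rw [Mv_congr x y (fun t => (t - (if K ≤ t then 1 else 0))
          - (t - (if K ≤ t then 1 else 0) - (if K ≤ t then 1 else 0)) / 2)
        (fun t => t - t / 2) K hxyK
        (fun t ht => by split_ifs <;> omega)] at hIH2
      rw [← sub_Mv x y (fun t => t / 2) (fun t => by show t / 2 ≤ t; omega)] at hIH2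
      exact le_trans hIH2 Hchi
    -- case split on exceptionality
    by_cases hexc : (split1 h (K / 2) = K / 2 ∧ split2 h (K - K / 2) = 0)
        ∨ (split1 h (K / 2) = 0 ∧ split2 h (K - K / 2) = K - K / 2)
    · rcases hexc with ⟨he1, he2⟩ | ⟨he1, he2⟩
      · -- h = floor half on [0, K]
        have hts : ∀ t, t ≤ K → h t = t / 2 := by
          intro t ht
          have hsp := HsU t
          have h1 := c1c.eq_id he1 (show t / 2 ≤ K / 2 by omega)
          have h2 : split2 h (t - t / 2) = 0 := by
            have := c2c.mono (show t - t / 2 ≤ K - K / 2 by omega)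
            omega
          omega
        rw [Mv_congr x y h (fun t => t / 2) K hxyK hts]
        exact Hmid
      · -- h = ceil half on [0, K]
        have hts : ∀ t, t ≤ K → h t = t - t / 2 := by
          intro t ht
          have hsp := HsU t
          have h2 := c2c.eq_id he2 (show t - t / 2 ≤ K - K / 2 by omega)
          have h1 : split1 h (t / 2) = 0 := by
            have := c1c.mono (show t / 2 ≤ K / 2 by omega)
            omega
          omega
        rw [Mv_congr x y h (fun t => t - t / 2) K hxyK hts]
        have hxx : x + Mv x y (fun t => t - t / 2) = y - Mv x y (fun t => t / 2) :=
          (sub_Mv x y (fun t => t / 2) (fun t => by show t / 2 ≤ t; omega)).symm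
        have hyy : y - Mv x y (fun t => t - t / 2) = x + Mv x y (fun t => t / 2) := by
          rw [sub_Mv x y (fun t => t - t / 2) (fun t => by show t - t / 2 ≤ t; omega)]
          rw [Mv_congr x y (fun t => t - (t - t / 2)) (fun t => t / 2) K hxyK
            (fun t ht => by show t - (t - t / 2) = t / 2; omega)]
        rw [hxx, hyy, add_comm]
        exact Hmid
    · -- generic case: one of the four schemes applies
      push_neg at hexc
      have hcover : (split2 h (K - K / 2) + 1 ≤ K - K / 2
            ∧ split1 h (K / 2) + 1 ≤ K / 2 + split2 h (K - K / 2))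
          ∨ (split1 h (K / 2) + 1 ≤ K / 2
            ∧ split2 h (K - K / 2) + 1 ≤ (K - K / 2) + split1 h (K / 2))
          ∨ (1 ≤ split2 h (K - K / 2)
            ∧ split2 h (K - K / 2) + 1 ≤ (K - K / 2) + split1 h (K / 2))
          ∨ (1 ≤ split1 h (K / 2)
            ∧ split1 h (K / 2) + 1 ≤ K / 2 + split2 h (K - K / 2)) := by
        omega
      rcases hcover with ⟨cc1, cc2⟩ | ⟨cc1, cc2⟩ | ⟨cc1, cc2⟩ | ⟨cc1, cc2⟩
      · -- scheme U
        exact scheme f hbot K hK3 IHs x y hxyK hx hy (fun t => t / 2) (fun t => t - t / 2)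
          (split1 h) (split2 h) h cef cgf c1c c2c ch He HsU hu
          (by show 1 ≤ K - K / 2; omega) (by show (K - K / 2) + 1 ≤ K; omega)
          (by show K / 2 + split2 h (K - K / 2) + 1 ≤ K; omega)
          (by show split1 h (K / 2) + (K - K / 2) + 1 ≤ K + split2 h (K - K / 2); omega)
      · -- scheme V
        refine scheme f hbot K hK3 IHs x y hxyK hx hy (fun t => t - t / 2) (fun t => t / 2)
          (split2 h) (split1 h) h cgf cef c2c c1c ch (fun t => by show (t - t / 2) + t / 2 = t; omega)
          (fun t => by show h t = split2 h (t - t / 2) + split1 h (t / 2); rw [HsU t]; omega) hw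
          (by show 1 ≤ K / 2; omega) (by show K / 2 + 1 ≤ K; omega)
          (by show (K - K / 2) + split1 h (K / 2) + 1 ≤ K; omega)
          (by show split2 h (K - K / 2) + K / 2 + 1 ≤ K + split1 h (K / 2); omega)
      · -- scheme U on the complement
        have hres := scheme f hbot K hK3 IHs x y hxyK hx hy (fun t => t / 2)
          (fun t => t - t / 2)
          (fun r => r - split1 h r) (fun r => r - split2 h r) (fun t => t - h t)
          cef cgf c1c.compl c2c.compl ch.compl He
          (fun t => by
            show t - h t = (t / 2 - split1 h (t / 2)) + ((t - t / 2) - split2 h (t - t / 2))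
            have := HsU t
            have := c1c.le_self (t / 2)
            have := c2c.le_self (t - t / 2)
            have := ch.le_self t
            omega)
          hu (by show 1 ≤ K - K / 2; omega) (by show (K - K / 2) + 1 ≤ K; omega)
          (by show K / 2 + ((K - K / 2) - split2 h (K - K / 2)) + 1 ≤ K; omega)
          (by show (K / 2 - split1 h (K / 2)) + (K - K / 2) + 1
                ≤ K + ((K - K / 2) - split2 h (K - K / 2)); omega)
        have e1 : x + Mv x y (fun t => t - h t) = y - Mv x y h :=
          (sub_Mv x y h ch.le_self).symm
        have e2 : y - Mv x y (fun t => t - h t) = x + Mv x y h := by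
          rw [sub_Mv x y (fun t => t - h t) (fun t => by show t - h t ≤ t; omega)]
          rw [show Mv x y (fun t => t - (t - h t)) = Mv x y h from
            congrArg _ (funext fun t => by have := ch.le_self t; omega)]
        rw [e1, e2] at hres
        rw [add_comm]
        exact hres
      · -- scheme V on the complement
        have hres := scheme f hbot K hK3 IHs x y hxyK hx hy (fun t => t - t / 2)
          (fun t => t / 2)
          (fun r => r - split2 h r) (fun r => r - split1 h r) (fun t => t - h t)
          cgf cef c2c.compl c1c.compl ch.compl (fun t => by show (t - t / 2) + t / 2 = t; omega)
          (fun t => by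
            show t - h t = ((t - t / 2) - split2 h (t - t / 2)) + (t / 2 - split1 h (t / 2))
            have := HsU t
            have := c1c.le_self (t / 2)
            have := c2c.le_self (t - t / 2)
            have := ch.le_self t
            omega)
          hw (by show 1 ≤ K / 2; omega) (by show K / 2 + 1 ≤ K; omega)
          (by show (K - K / 2) + (K / 2 - split1 h (K / 2)) + 1 ≤ K; omega)
          (by show ((K - K / 2) - split2 h (K - K / 2)) + K / 2 + 1
                ≤ K + (K / 2 - split1 h (K / 2)); omega)
        have e1 : x + Mv x y (fun t => t - h t) = y - Mv x y h :=
          (sub_Mv x y h ch.le_self).symm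
        have e2 : y - Mv x y (fun t => t - h t) = x + Mv x y h := by
          rw [sub_Mv x y (fun t => t - h t) (fun t => by show t - h t ≤ t; omega)]
          rw [show Mv x y (fun t => t - (t - h t)) = Mv x y h from
            congrArg _ (funext fun t => by have := ch.le_self t; omega)]
        rw [e1, e2] at hres
        rw [add_comm]
        exact hres

/-! ### chi helper identities -/

lemma chi_one {n : ℕ} (x y : Fin n → ℤ) (h1 : normInf (y - x) = 1) : chi x y 1 = y - x := by
  funext i
  have := abs_le_of_normInf (le_of_eq h1) i
  simp only [chi, Pi.sub_apply]
  split_ifs <;> omega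

end DDMAux

namespace DDMAux

variable {n : ℕ}

lemma one_to_two (f : (Fin n → ℤ) → EReal) (hbot : ∀ x, f x ≠ ⊥) (H1 : DDMConvexFn f) :
    DDMConvexSet {x : Fin n → ℤ | f x ≠ ⊤} ∧
      ∀ x y : Fin n → ℤ, normInf (x - y) = 2 →
        f (dmu x y) + f (dmu y x) ≤ f x + f y := by
  constructor
  · intro x hx y hy
    exact fin_of_le (H1 x y) (hbot _) (hbot _) hx hy
  · intro x y _
    exact H1 x y

lemma two_to_three (f : (Fin n → ℤ) → EReal) (hbot : ∀ x, f x ≠ ⊥)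
    (Hdom : DDMConvexSet {x : Fin n → ℤ | f x ≠ ⊤})
    (H2 : ∀ x y : Fin n → ℤ, normInf (x - y) = 2 → f (dmu x y) + f (dmu y x) ≤ f x + f y) :
    ∀ x y : Fin n → ℤ, f x ≠ ⊤ → f y ≠ ⊤ →
      ∀ J ⊆ Finset.Icc 1 (normInf (y - x)),
        f (x + ∑ k ∈ J, chi x y k) + f (y - ∑ k ∈ J, chi x y k) ≤ f x + f y := by
  intro x y hx hy J hJ
  have hk1 : ∀ k ∈ J, 1 ≤ k := fun k hk => (Finset.mem_Icc.mp (hJ hk)).1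
  rw [chi_sum x y J hk1]
  exact master f hbot Hdom H2 (normInf (y - x)) x y le_rfl hx hy _ (cap_card J)

lemma five_to_four (f : (Fin n → ℤ) → EReal) (hbot : ∀ x, f x ≠ ⊥)
    (H5 : ∀ x y : Fin n → ℤ, f x ≠ ⊤ → f y ≠ ⊤ →
      ∀ α ∈ Finset.Icc 1 (normInf (y - x)),
        f (x + ∑ k ∈ Finset.Icc 1 α, chi x y k)
          + f (y - ∑ k ∈ Finset.Icc 1 α, chi x y k) ≤ f x + f y) :
    ∀ x y : Fin n → ℤ, f x ≠ ⊤ → f y ≠ ⊤ →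
      f (x + chi x y (normInf (y - x))) + f (y - chi x y (normInf (y - x)))
        ≤ f x + f y := by
  intro x y hx hy
  by_cases h0 : normInf (y - x) = 0
  · rw [h0, chi_zero x y h0]
    simp
  · by_cases h1 : normInf (y - x) = 1
    · rw [h1, chi_one x y h1]
      have e1 : x + (y - x) = y := by abel
      have e2 : y - (y - x) = x := by abel
      rw [e1, e2, add_comm]
    · have hK2 : 2 ≤ normInf (y - x) := by omega
      have hmem : normInf (y - x) - 1 ∈ Finset.Icc 1 (normInf (y - x)) :=
        Finset.mem_Icc.mpr ⟨by omega, by omega⟩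
      have h5 := H5 x y hx hy (normInf (y - x) - 1) hmem
      have hk1 : ∀ k ∈ Finset.Icc 1 (normInf (y - x) - 1), 1 ≤ k :=
        fun k hk => (Finset.mem_Icc.mp hk).1
      rw [chi_sum x y _ hk1] at h5
      have hcc : ∀ t, t ≤ normInf (y - x) →
          ((Finset.Icc 1 (normInf (y - x) - 1) ∩ Finset.Icc 1 t).card)
            = t - (if normInf (y - x) ≤ t then 1 else 0) := by
        intro t ht
        have hset : Finset.Icc 1 (normInf (y - x) - 1) ∩ Finset.Icc 1 t
            = Finset.Icc 1 (min (normInf (y - x) - 1) t) := by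
          ext k
          simp only [Finset.mem_inter, Finset.mem_Icc, le_min_iff]
          omega
        rw [hset, Nat.card_Icc]
        split_ifs <;> omega
      rw [Mv_congr x y _ (fun t => t - (if normInf (y - x) ≤ t then 1 else 0))
        (normInf (y - x)) le_rfl hcc] at h5
      have hchile : ∀ t, (if normInf (y - x) ≤ t then 1 else 0) ≤ t := by
        intro t; split_ifs <;> omega
      rw [Mv_sub x y (fun t => t) (fun t => if normInf (y - x) ≤ t then 1 else 0) hchile] at h5
      have hMvid : Mv x y (fun t => t) = y - x := by
        have := Mv_id x y
        funext i
        have hh := congrFun this i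
        simp only [Pi.add_apply, Pi.sub_apply] at hh ⊢
        omega
      rw [hMvid, ← chi_eq_Mv x y _ (by omega)] at h5
      have e1 : x + (y - x - chi x y (normInf (y - x))) = y - chi x y (normInf (y - x)) := by
        abel
      have e2 : y - (y - x - chi x y (normInf (y - x))) = x + chi x y (normInf (y - x)) := by
        abel
      rw [e1, e2, add_comm] at h5
      exact h5

lemma four_to_one (f : (Fin n → ℤ) → EReal) (hbot : ∀ x, f x ≠ ⊥)
    (H4 : ∀ x y : Fin n → ℤ, f x ≠ ⊤ → f y ≠ ⊤ →
      f (x + chi x y (normInf (y - x))) + f (y - chi x y (normInf (y - x)))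
        ≤ f x + f y) :
    DDMConvexFn f := by
  have key : ∀ M : ℕ, ∀ x y : Fin n → ℤ, normInf (y - x) ≤ M → f x ≠ ⊤ → f y ≠ ⊤ →
      f (dmu x y) + f (dmu y x) ≤ f x + f y := by
    intro M
    induction M with
    | zero =>
      intro x y hK hx hy
      have hsm := dmu_small (show normInf (y - x) ≤ 1 by omega)
      rw [hsm.1, hsm.2]
    | succ M IH =>
      intro x y hK hx hy
      by_cases hK1 : normInf (y - x) ≤ 1
      · have hsm := dmu_small hK1
        rw [hsm.1, hsm.2]
      · push_neg at hK1
        have hK2 : 2 ≤ normInf (y - x) := hK1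
        have h4 := H4 x y hx hy
        rw [chi_eq_Mv x y (normInf (y - x)) (by omega)] at h4
        obtain ⟨hx2, hy2⟩ := fin_of_le h4 (hbot _) (hbot _) hx hy
        have hchile : ∀ t, (if normInf (y - x) ≤ t then 1 else 0) ≤ t := by
          intro t; split_ifs <;> omega
        have hchile2 : ∀ t, (if normInf (y - x) ≤ t then 1 else 0)
            ≤ t - (if normInf (y - x) ≤ t then 1 else 0) := by
          intro t; split_ifs <;> omega
        have hd2 : normInf ((y - Mv x y (fun t => if normInf (y - x) ≤ t then 1 else 0))
            - (x + Mv x y (fun t => if normInf (y - x) ≤ t then 1 else 0))) ≤ M := by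
          rw [sub_Mv x y _ hchile,
            pt_sub_pt x y (fun t => if normInf (y - x) ≤ t then 1 else 0)
              (fun t => t - (if normInf (y - x) ≤ t then 1 else 0)) hchile2]
          refine normInf_Mv_le x y _ (normInf (y - x)) M le_rfl fun t ht => ?_
          (try dsimp only)
          split_ifs <;> omega
        have hIH := IH (x + Mv x y (fun t => if normInf (y - x) ≤ t then 1 else 0))
          (y - Mv x y (fun t => if normInf (y - x) ≤ t then 1 else 0)) hd2 hx2 hy2
        rw [sub_Mv x y (fun t => if normInf (y - x) ≤ t then 1 else 0) hchile] at hIH h4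
        rw [dmu_eq (x + Mv x y (fun t => if normInf (y - x) ≤ t then 1 else 0)),
          dmu_eq' (x + Mv x y (fun t => if normInf (y - x) ≤ t then 1 else 0))] at hIH
        rw [Mv_pair x y (fun t => if normInf (y - x) ≤ t then 1 else 0)
          (fun t => t - (if normInf (y - x) ≤ t then 1 else 0)) (fun t => t / 2)
          rfl hchile2] at hIH
        rw [pt_add x y (fun t => if normInf (y - x) ≤ t then 1 else 0)
          (fun t => (t - (if normInf (y - x) ≤ t then 1 else 0)
            - (if normInf (y - x) ≤ t then 1 else 0)) / 2)] at hIH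
        rw [Mv_congr x y (fun t => (if normInf (y - x) ≤ t then 1 else 0)
            + (t - (if normInf (y - x) ≤ t then 1 else 0)
              - (if normInf (y - x) ≤ t then 1 else 0)) / 2)
          (fun t => t / 2) (normInf (y - x)) le_rfl
          (fun t ht => by (try dsimp only); split_ifs <;> omega)] at hIH
        rw [pt_sub_mv x y (fun t => t - (if normInf (y - x) ≤ t then 1 else 0))
          (fun t => (t - (if normInf (y - x) ≤ t then 1 else 0)
            - (if normInf (y - x) ≤ t then 1 else 0)) / 2)
          (fun t => by (try dsimp only); split_ifs <;> omega)] at hIH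
        rw [Mv_congr x y (fun t => (t - (if normInf (y - x) ≤ t then 1 else 0))
            - (t - (if normInf (y - x) ≤ t then 1 else 0)
              - (if normInf (y - x) ≤ t then 1 else 0)) / 2)
          (fun t => t - t / 2) (normInf (y - x)) le_rfl
          (fun t ht => by (try dsimp only); split_ifs <;> omega)] at hIH
        rw [← sub_Mv x y (fun t => t / 2) (fun t => by show t / 2 ≤ t; omega)] at hIH
        rw [← dmu_eq, ← dmu_eq'] at hIH
        exact le_trans hIH h4
  intro x y
  by_cases hx : f x = ⊤
  · rw [hx, EReal.top_add_of_ne_bot (hbot y)]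
    exact le_top
  · by_cases hy : f y = ⊤
    · rw [hy, EReal.add_top_of_ne_bot (hbot x)]
      exact le_top
    · exact key (normInf (y - x)) x y le_rfl hx hy

end DDMAux


open DDMAux in
/-- Characterizations of DDM-convexity: the following are equivalent for
`f : ℤⁿ → ℝ ∪ {+∞}` (with `A_k = {i : yᵢ-xᵢ ≥ k}`, `B_k = {i : yᵢ-xᵢ ≤ -k}`,
`m = ‖y-x‖_∞`): (1) `f` is DDM-convex; (2) `dom f` is DDM-convex and the DDM
inequality holds for all pairs at ℓ∞-distance 2; (3) the parallelogram
inequalities hold for all `x, y ∈ dom f` and all `J ⊆ {1,…,m}`; (4) for all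
`x, y ∈ dom f`, `f(x)+f(y) ≥ f(x+1_{A_m}-1_{B_m}) + f(y-1_{A_m}+1_{B_m})`;
(5) for all `x, y ∈ dom f` and `α ∈ {1,…,m}`, with `d = Σ_{k=1}^α (1_{A_k}-1_{B_k})`,
`f(x)+f(y) ≥ f(x+d)+f(y-d)`. -/
theorem ddmConvex_tfae {n : ℕ} (f : (Fin n → ℤ) → EReal) (hbot : ∀ x, f x ≠ ⊥) :
    [ DDMConvexFn f,
      DDMConvexSet {x : Fin n → ℤ | f x ≠ ⊤} ∧
        ∀ x y : Fin n → ℤ, normInf (x - y) = 2 →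
          f (dmu x y) + f (dmu y x) ≤ f x + f y,
      ∀ x y : Fin n → ℤ, f x ≠ ⊤ → f y ≠ ⊤ →
        ∀ J ⊆ Finset.Icc 1 (normInf (y - x)),
          f (x + ∑ k ∈ J, chi x y k) + f (y - ∑ k ∈ J, chi x y k) ≤ f x + f y,
      ∀ x y : Fin n → ℤ, f x ≠ ⊤ → f y ≠ ⊤ →
        f (x + chi x y (normInf (y - x))) + f (y - chi x y (normInf (y - x)))
          ≤ f x + f y,
      ∀ x y : Fin n → ℤ, f x ≠ ⊤ → f y ≠ ⊤ →
        ∀ α ∈ Finset.Icc 1 (normInf (y - x)),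
          f (x + ∑ k ∈ Finset.Icc 1 α, chi x y k)
            + f (y - ∑ k ∈ Finset.Icc 1 α, chi x y k) ≤ f x + f y ].TFAE := by
  tfae_have 1 → 2 := fun H1 => one_to_two f hbot H1
  tfae_have 2 → 3 := fun H2 => two_to_three f hbot H2.1 H2.2
  tfae_have 3 → 5 := by
    intro H3 x y hx hy α hα
    exact H3 x y hx hy (Finset.Icc 1 α)
      (Finset.Icc_subset_Icc_right (Finset.mem_Icc.mp hα).2)
  tfae_have 5 → 4 := fun H5 => five_to_four f hbot H5
  tfae_have 4 → 1 := fun H4 => four_to_one f hbot H4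
  tfae_finish
end

section
/- Let Q = [q_{ij}] ∈ ℝ^{n×n} be a symmetric matrix and let f : ℤⁿ → ℝ be the quadratic function f(x) = xᵀQx. Then f is DDM-convex if and only if Q is diagonally dominant with nonnegative diagonals, i.e., q_{ii} ≥ Σ_{j≠i} |q_{ij}| for every i = 1, …, n. -/
open Finset

lemma floor_half (s : ℤ) : ⌊((s : ℚ)) / 2⌋ = s / 2 := by
  rw [show ((2:ℚ)) = ((2:ℕ):ℚ) by norm_num, Rat.floor_intCast_div_natCast]
  norm_num

lemma ceil_half (s : ℤ) : ⌈((s : ℚ)) / 2⌉ = (s + 1) / 2 := by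
  have h : ⌈((s : ℚ)) / 2⌉ = -⌊-(((s : ℚ)) / 2)⌋ := by
    rw [Int.floor_neg]; ring_nf
  rw [h, show -(((s : ℚ)) / 2) = ((-s : ℤ) : ℚ) / 2 by push_cast; ring, floor_half]
  omega

lemma dmu_add {n : ℕ} (x y : Fin n → ℤ) (i : Fin n) :
    dmu x y i + dmu y x i = x i + y i := by
  simp only [dmu, add_comm (y i) (x i), ceil_half, floor_half]
  split_ifs <;> omega

lemma props_of (d e : ℤ) (h0 : e = 0 ∨ (0 < d ∧ e = 1) ∨ (d < 0 ∧ e = -1)) (hp : 2 ∣ d - e) :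
    e * e ≤ 1 ∧ 2 ∣ d - e ∧ 0 ≤ d * e ∧ e * e ≤ d * d := by
  rcases h0 with rfl | ⟨hd, rfl⟩ | ⟨hd, rfl⟩
  · exact ⟨by norm_num, hp, by simp, by nlinarith [sq_nonneg d]⟩
  · exact ⟨by norm_num, hp, by nlinarith, by nlinarith⟩
  · exact ⟨by norm_num, hp, by nlinarith, by nlinarith⟩

lemma dmu_sub_props {n : ℕ} (x y : Fin n → ℤ) (i : Fin n) :
    (dmu x y i - dmu y x i) * (dmu x y i - dmu y x i) ≤ 1 ∧
    2 ∣ (x i - y i) - (dmu x y i - dmu y x i) ∧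
    0 ≤ (x i - y i) * (dmu x y i - dmu y x i) ∧
    (dmu x y i - dmu y x i) * (dmu x y i - dmu y x i) ≤ (x i - y i) * (x i - y i) := by
  simp only [dmu, add_comm (y i) (x i), ceil_half, floor_half]
  split_ifs <;> exact props_of _ _ (by omega) (by omega)

lemma pair_sq (a b e f : ℤ)
    (he3 : e = -1 ∨ e = 0 ∨ e = 1) (hf3 : f = -1 ∨ f = 0 ∨ f = 1)
    (hpa : 2 ∣ a - e) (hpb : 2 ∣ b - f) (hsa : 0 ≤ a * e) (hsb : 0 ≤ b * f) :
    (e - f) * (e - f) ≤ (a - b) * (a - b) := by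
  rcases he3 with rfl | rfl | rfl <;> rcases hf3 with rfl | rfl | rfl <;>
    first
    | nlinarith [sq_nonneg (a - b)]
    | (rcases (show a - b ≤ -1 ∨ 1 ≤ a - b by omega) with h | h <;> nlinarith)
    | (have ha : 1 ≤ a := by omega
       have hb : b ≤ -1 := by omega
       nlinarith [sq_nonneg (a - b - 2)])
    | (have ha : a ≤ -1 := by omega
       have hb : 1 ≤ b := by omega
       nlinarith [sq_nonneg (a - b + 2)])

lemma key_pair (a b e f : ℤ) (he : e * e ≤ 1) (hf : f * f ≤ 1)
    (hpa : 2 ∣ a - e) (hpb : 2 ∣ b - f) (hsa : 0 ≤ a * e) (hsb : 0 ≤ b * f)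
    (haa : e * e ≤ a * a) (hbb : f * f ≤ b * b) :
    2 * |a * b - e * f| ≤ (a * a - e * e) + (b * b - f * f) := by
  have he3 : e = -1 ∨ e = 0 ∨ e = 1 := by
    have h1 : -1 ≤ e := by nlinarith [sq_nonneg (e + 1)]
    have h2 : e ≤ 1 := by nlinarith [sq_nonneg (e - 1)]
    omega
  have hf3 : f = -1 ∨ f = 0 ∨ f = 1 := by
    have h1 : -1 ≤ f := by nlinarith [sq_nonneg (f + 1)]
    have h2 : f ≤ 1 := by nlinarith [sq_nonneg (f - 1)]
    omega
  have hsub := pair_sq a b e f he3 hf3 hpa hpb hsa hsb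
  have hadd : (e + f) * (e + f) ≤ (a + b) * (a + b) := by
    have h := pair_sq a (-b) e (-f) he3 (by omega) hpa (by omega)
      hsa (by rw [neg_mul_neg]; exact hsb)
    nlinarith [h]
  rcases abs_cases (a * b - e * f) with ⟨hc, _⟩ | ⟨hc, _⟩ <;> rw [hc] <;> nlinarith [hsub, hadd]

noncomputable def qf {n : ℕ} (Q : Matrix (Fin n) (Fin n) ℝ) (a : Fin n → ℝ) : ℝ :=
  ∑ i, ∑ j, Q i j * a i * a j

lemma qf_parallelogram {n : ℕ} (Q : Matrix (Fin n) (Fin n) ℝ) (a b : Fin n → ℝ) :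
    qf Q a + qf Q b = (qf Q (a + b) + qf Q (a - b)) / 2 := by
  simp only [qf, ← Finset.sum_add_distrib, Finset.sum_div]
  refine Finset.sum_congr rfl fun i _ => ?_
  refine Finset.sum_congr rfl fun j _ => ?_
  simp only [Pi.add_apply, Pi.sub_apply]
  ring

lemma offdiag_swap {n : ℕ} (F : Fin n → Fin n → ℝ) :
    ∑ i, ∑ j ∈ univ.erase i, F i j = ∑ j, ∑ i ∈ univ.erase j, F i j :=
  Finset.sum_comm' (by simp [ne_comm, and_comm])

lemma qf_mono {n : ℕ} (Q : Matrix (Fin n) (Fin n) ℝ) (hQ : Q.IsSymm)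
    (hdom : ∀ i, ∑ j ∈ univ.erase i, |Q i j| ≤ Q i i)
    (d e : Fin n → ℤ)
    (h1 : ∀ i, e i * e i ≤ 1) (h2 : ∀ i, 2 ∣ d i - e i)
    (h3 : ∀ i, 0 ≤ d i * e i) (h4 : ∀ i, e i * e i ≤ d i * d i) :
    qf Q (fun i => (e i : ℝ)) ≤ qf Q (fun i => (d i : ℝ)) := by
  obtain ⟨D, hD⟩ : ∃ D : Fin n → ℝ, ∀ i, ((d i : ℤ) : ℝ) = D i := ⟨_, fun _ => rfl⟩
  obtain ⟨E, hE⟩ : ∃ E : Fin n → ℝ, ∀ i, ((e i : ℤ) : ℝ) = E i := ⟨_, fun _ => rfl⟩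
  obtain ⟨c, hcDef⟩ : ∃ c : Fin n → ℝ, ∀ i, c i = D i * D i - E i * E i :=
    ⟨_, fun _ => rfl⟩
  have hc0 : ∀ i, 0 ≤ c i := by
    intro i
    rw [hcDef i, ← hD, ← hE, sub_nonneg]
    exact_mod_cast h4 i
  have hkey : ∀ i j, 2 * |D i * D j - E i * E j| ≤ c i + c j := by
    intro i j
    rw [hcDef i, hcDef j, ← hD, ← hD, ← hE, ← hE]
    exact_mod_cast key_pair (d i) (d j) (e i) (e j) (h1 i) (h1 j) (h2 i) (h2 j) (h3 i) (h3 j)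
      (h4 i) (h4 j)
  rw [← sub_nonneg]
  simp only [qf, hD, hE, ← Finset.sum_sub_distrib]
  have H : ∑ i, ∑ j ∈ univ.erase i, |Q i j| * ((c i + c j) / 2)
      = ∑ i, ∑ j ∈ univ.erase i, |Q i j| * c i := by
    have e1 : ∑ i, ∑ j ∈ univ.erase i, |Q i j| * (c j / 2)
        = ∑ i, ∑ j ∈ univ.erase i, |Q i j| * (c i / 2) := by
      rw [offdiag_swap]
      exact Finset.sum_congr rfl fun j _ => Finset.sum_congr rfl fun i _ => by rw [hQ.apply]
    calc ∑ i, ∑ j ∈ univ.erase i, |Q i j| * ((c i + c j) / 2)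
        = ∑ i, ((∑ j ∈ univ.erase i, |Q i j| * (c i / 2))
            + ∑ j ∈ univ.erase i, |Q i j| * (c j / 2)) := by
          refine Finset.sum_congr rfl fun i _ => ?_
          rw [← Finset.sum_add_distrib]
          exact Finset.sum_congr rfl fun j _ => by ring
      _ = (∑ i, ∑ j ∈ univ.erase i, |Q i j| * (c i / 2))
            + ∑ i, ∑ j ∈ univ.erase i, |Q i j| * (c j / 2) := Finset.sum_add_distrib
      _ = (∑ i, ∑ j ∈ univ.erase i, |Q i j| * (c i / 2))
            + ∑ i, ∑ j ∈ univ.erase i, |Q i j| * (c i / 2) := by rw [e1]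
      _ = ∑ i, ((∑ j ∈ univ.erase i, |Q i j| * (c i / 2))
            + ∑ j ∈ univ.erase i, |Q i j| * (c i / 2)) := Finset.sum_add_distrib.symm
      _ = ∑ i, ∑ j ∈ univ.erase i, |Q i j| * c i := by
          refine Finset.sum_congr rfl fun i _ => ?_
          rw [← Finset.sum_add_distrib]
          exact Finset.sum_congr rfl fun j _ => by ring
  calc (0:ℝ) ≤ ∑ i, c i * (Q i i - ∑ j ∈ univ.erase i, |Q i j|) :=
        Finset.sum_nonneg fun i _ => mul_nonneg (hc0 i) (sub_nonneg.mpr (hdom i))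
    _ = ∑ i, (Q i i * c i - ∑ j ∈ univ.erase i, |Q i j| * c i) := by
        refine Finset.sum_congr rfl fun i _ => ?_
        rw [mul_sub, Finset.mul_sum]
        congr 1
        · ring
        · exact Finset.sum_congr rfl fun j _ => by ring
    _ = ∑ i, (Q i i * c i - ∑ j ∈ univ.erase i, |Q i j| * ((c i + c j) / 2)) := by
        rw [Finset.sum_sub_distrib, Finset.sum_sub_distrib, H]
    _ ≤ ∑ i, (Q i i * c i + ∑ j ∈ univ.erase i, (Q i j * D i * D j - Q i j * E i * E j)) := by
        refine Finset.sum_le_sum fun i _ => ?_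
        have hstep : -∑ j ∈ univ.erase i, |Q i j| * ((c i + c j) / 2)
            ≤ ∑ j ∈ univ.erase i, (Q i j * D i * D j - Q i j * E i * E j) := by
          rw [← Finset.sum_neg_distrib]
          refine Finset.sum_le_sum fun j _ => ?_
          have h1' : Q i j * D i * D j - Q i j * E i * E j
              = Q i j * (D i * D j - E i * E j) := by ring
          rw [h1']
          have habs : |Q i j * (D i * D j - E i * E j)| ≤ |Q i j| * ((c i + c j) / 2) := by
            rw [abs_mul]
            refine mul_le_mul_of_nonneg_left ?_ (abs_nonneg _)
            linarith [hkey i j]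
          linarith [neg_abs_le (Q i j * (D i * D j - E i * E j))]
        linarith
    _ = ∑ i, ∑ j, (Q i j * D i * D j - Q i j * E i * E j) := by
        refine Finset.sum_congr rfl fun i _ => ?_
        rw [← Finset.add_sum_erase univ _ (Finset.mem_univ i)]
        congr 1
        rw [hcDef i]
        ring

lemma triple_sub {n : ℕ} (F G H : Fin n → Fin n → ℝ) :
    ∑ k, ∑ j, (F k j - G k j - H k j)
      = (∑ k, ∑ j, F k j) - (∑ k, ∑ j, G k j) - (∑ k, ∑ j, H k j) := by
  simp only [Finset.sum_sub_distrib]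

lemma forward_calc {n : ℕ} (Q : Matrix (Fin n) (Fin n) ℝ) (hQ : Q.IsSymm) (i : Fin n)
    (τ : Fin n → ℝ) (X U V : Fin n → ℝ)
    (hX : ∀ j, X j = if j = i then 2 else τ j)
    (hU : ∀ j, U j = if j = i then 1 else τ j)
    (hV : ∀ j, V j = if j = i then 1 else 0) :
    (∑ k, ∑ j, Q k j * X k * X j) - (∑ k, ∑ j, Q k j * U k * U j)
      - (∑ k, ∑ j, Q k j * V k * V j)
    = 2 * Q i i + 2 * ∑ j ∈ univ.erase i, Q i j * τ j := by
  rw [← triple_sub]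
  have inner_i : ∑ j, (Q i j * X i * X j - Q i j * U i * U j - Q i j * V i * V j)
      = 2 * Q i i + ∑ j ∈ univ.erase i, Q i j * τ j := by
    rw [← Finset.add_sum_erase univ _ (Finset.mem_univ i)]
    congr 1
    · simp only [hX, hU, hV, eq_self_iff_true, if_true]
      ring
    · refine Finset.sum_congr rfl fun j hj => ?_
      have hj' : j ≠ i := Finset.ne_of_mem_erase hj
      simp only [hX, hU, hV, hj', eq_self_iff_true, if_true, if_false]
      ring
  have inner_k : ∀ k, k ≠ i →
      ∑ j, (Q k j * X k * X j - Q k j * U k * U j - Q k j * V k * V j) = Q k i * τ k := by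
    intro k hk
    rw [← Finset.add_sum_erase univ _ (Finset.mem_univ i)]
    have t1 : Q k i * X k * X i - Q k i * U k * U i - Q k i * V k * V i = Q k i * τ k := by
      simp only [hX, hU, hV, hk, eq_self_iff_true, if_true, if_false]
      ring
    have t2 : ∑ j ∈ univ.erase i, (Q k j * X k * X j - Q k j * U k * U j - Q k j * V k * V j)
        = 0 := by
      refine Finset.sum_eq_zero fun j hj => ?_
      have hj' : j ≠ i := Finset.ne_of_mem_erase hj
      simp only [hX, hU, hV, hk, hj', eq_self_iff_true, if_true, if_false]
      ring
    rw [t1, t2, add_zero]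
  rw [← Finset.add_sum_erase univ
    (fun k => ∑ j, (Q k j * X k * X j - Q k j * U k * U j - Q k j * V k * V j))
    (Finset.mem_univ i), inner_i]
  have hrest : ∑ k ∈ univ.erase i,
      ∑ j, (Q k j * X k * X j - Q k j * U k * U j - Q k j * V k * V j)
      = ∑ k ∈ univ.erase i, Q i k * τ k := by
    refine Finset.sum_congr rfl fun k hk => ?_
    rw [inner_k k (Finset.ne_of_mem_erase hk), hQ.apply]
  rw [hrest]
  ring

/-- For a quadratic `f(x) = xᵀQx` with symmetric `Q`, `f` is DDM-convex iff `Q`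
is diagonally dominant with nonnegative diagonals: `qᵢᵢ ≥ Σ_{j≠i} |qᵢⱼ|`. -/
theorem quadratic_ddmConvex_iff_diag_dominant {n : ℕ}
    (Q : Matrix (Fin n) (Fin n) ℝ) (hQ : Q.IsSymm) :
    (∀ x y : Fin n → ℤ,
        (∑ i, ∑ j, Q i j * (dmu x y i : ℝ) * (dmu x y j : ℝ))
          + (∑ i, ∑ j, Q i j * (dmu y x i : ℝ) * (dmu y x j : ℝ))
        ≤ (∑ i, ∑ j, Q i j * (x i : ℝ) * (x j : ℝ))
          + (∑ i, ∑ j, Q i j * (y i : ℝ) * (y j : ℝ)))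
      ↔ ∀ i, ∑ j ∈ Finset.univ.erase i, |Q i j| ≤ Q i i := by
  constructor
  · intro h i
    set σ : Fin n → ℤ := fun j => if 0 ≤ Q i j then -1 else 1 with hσ
    set xv : Fin n → ℤ := fun j => if j = i then 2 else σ j with hxv
    set τ : Fin n → ℝ := fun j => if 0 ≤ Q i j then (-1:ℝ) else 1 with hτ
    have hτc : ∀ j, ((σ j : ℤ) : ℝ) = τ j := by
      intro j
      simp only [hσ, hτ, apply_ite (fun z : ℤ => (z : ℝ))]
      norm_num
    have c1 : ⌈(1 : ℚ) / 2⌉ = 1 := by rw [Int.ceil_eq_iff] <;> norm_num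
    have c2 : ⌈(-1 : ℚ) / 2⌉ = 0 := by rw [Int.ceil_eq_iff] <;> norm_num
    have c3 : ⌈(2 : ℚ) / 2⌉ = 1 := by norm_num
    have f1 : ⌊(1 : ℚ) / 2⌋ = 0 := by rw [Int.floor_eq_iff] <;> norm_num
    have f2 : ⌊(-1 : ℚ) / 2⌋ = -1 := by rw [Int.floor_eq_iff] <;> norm_num
    have f3 : ⌊(2 : ℚ) / 2⌋ = 1 := by norm_num
    have hu : ∀ j, dmu xv 0 j = if j = i then 1 else σ j := by
      intro j
      by_cases hj : j = i
      · subst hj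
        simp only [dmu, hxv, if_pos rfl, Pi.zero_apply, add_zero]
        norm_num [c1, c2, c3]
      · simp only [dmu, hxv, if_neg hj, Pi.zero_apply, add_zero, hσ]
        by_cases hq : 0 ≤ Q i j
        · simp only [if_pos hq]
          norm_num [f1, f2, f3]
        · simp only [if_neg hq]
          norm_num [c1, c2, c3]
    have hv : ∀ j, dmu 0 xv j = if j = i then 1 else 0 := by
      intro j
      by_cases hj : j = i
      · subst hj
        simp only [dmu, hxv, if_pos rfl, Pi.zero_apply, zero_add]
        norm_num [f1, f2, f3]
      · simp only [dmu, hxv, if_neg hj, Pi.zero_apply, zero_add, hσ]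
        by_cases hq : 0 ≤ Q i j
        · simp only [if_pos hq]
          norm_num [c1, c2, c3]
        · simp only [if_neg hq]
          norm_num [f1, f2, f3]
    have hX : ∀ j, ((xv j : ℤ) : ℝ) = if j = i then 2 else τ j := by
      intro j
      simp only [hxv, apply_ite (fun z : ℤ => (z : ℝ)), hτc]
      norm_num
    have hU : ∀ j, ((dmu xv 0 j : ℤ) : ℝ) = if j = i then 1 else τ j := by
      intro j
      rw [hu j]
      simp only [apply_ite (fun z : ℤ => (z : ℝ)), hτc]
      norm_num
    have hV : ∀ j, ((dmu 0 xv j : ℤ) : ℝ) = if j = i then 1 else 0 := by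
      intro j
      rw [hv j]
      simp only [apply_ite (fun z : ℤ => (z : ℝ))]
      norm_num
    have calc1 : (∑ k, ∑ j, Q k j * ((xv k : ℤ) : ℝ) * ((xv j : ℤ) : ℝ))
        - (∑ k, ∑ j, Q k j * ((dmu xv 0 k : ℤ) : ℝ) * ((dmu xv 0 j : ℤ) : ℝ))
        - (∑ k, ∑ j, Q k j * ((dmu 0 xv k : ℤ) : ℝ) * ((dmu 0 xv j : ℤ) : ℝ))
        = 2 * Q i i + 2 * ∑ j ∈ univ.erase i, Q i j * τ j :=
      forward_calc Q hQ i τ _ _ _ hX hU hV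
    have hτsum : ∑ j ∈ univ.erase i, Q i j * τ j = -∑ j ∈ univ.erase i, |Q i j| := by
      rw [← Finset.sum_neg_distrib]
      refine Finset.sum_congr rfl fun j _ => ?_
      by_cases hq : 0 ≤ Q i j
      · simp only [hτ, if_pos hq, abs_of_nonneg hq]
        ring
      · simp only [hτ, if_neg hq, abs_of_neg (not_le.mp hq)]
        ring
    have hh := h xv 0
    simp only [Pi.zero_apply, Int.cast_zero, mul_zero, Finset.sum_const_zero,
      add_zero] at hh
    rw [hτsum] at calc1
    linarith [hh, calc1]
  · intro hdom x y
    have hpar1 := qf_parallelogram Q (fun i => ((x i : ℤ) : ℝ)) (fun i => ((y i : ℤ) : ℝ))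
    have hpar2 := qf_parallelogram Q (fun i => ((dmu x y i : ℤ) : ℝ))
      (fun i => ((dmu y x i : ℤ) : ℝ))
    have hsum : ((fun i => ((dmu x y i : ℤ) : ℝ)) + fun i => ((dmu y x i : ℤ) : ℝ))
        = ((fun i => ((x i : ℤ) : ℝ)) + fun i => ((y i : ℤ) : ℝ)) := by
      funext i
      simp only [Pi.add_apply]
      rw [← Int.cast_add, ← Int.cast_add, dmu_add]
    have hmono : qf Q ((fun i => ((dmu x y i : ℤ) : ℝ)) - fun i => ((dmu y x i : ℤ) : ℝ))
        ≤ qf Q ((fun i => ((x i : ℤ) : ℝ)) - fun i => ((y i : ℤ) : ℝ)) := by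
      have hde : ((fun i => ((dmu x y i : ℤ) : ℝ)) - fun i => ((dmu y x i : ℤ) : ℝ))
          = fun i => ((dmu x y i - dmu y x i : ℤ) : ℝ) := by
        funext i; simp [Pi.sub_apply]
      have hxy : ((fun i => ((x i : ℤ) : ℝ)) - fun i => ((y i : ℤ) : ℝ))
          = fun i => ((x i - y i : ℤ) : ℝ) := by
        funext i; simp [Pi.sub_apply]
      rw [hde, hxy]
      exact qf_mono Q hQ hdom (fun i => x i - y i) (fun i => dmu x y i - dmu y x i)
        (fun i => (dmu_sub_props x y i).1) (fun i => (dmu_sub_props x y i).2.1)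
        (fun i => (dmu_sub_props x y i).2.2.1) (fun i => (dmu_sub_props x y i).2.2.2)
    have hfin : qf Q (fun i => ((dmu x y i : ℤ) : ℝ)) + qf Q (fun i => ((dmu y x i : ℤ) : ℝ))
        ≤ qf Q (fun i => ((x i : ℤ) : ℝ)) + qf Q (fun i => ((y i : ℤ) : ℝ)) := by
      rw [hpar2, hsum, hpar1]
      linarith [hmono]
    simpa only [qf] using hfin
end

section
/- Let f : ℤ^{n+m} → ℝ ∪ {+∞} be a DDM-convex function and define its projection g : ℤⁿ → ℝ ∪ {+∞} by g(x) = inf{ f(x, y) : y ∈ ℤ^m }. If g(x) > −∞ for all x ∈ ℤⁿ, then g is DDM-convex. -/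
open Finset

lemma dmu_append {n m : ℕ} (x y : Fin n → ℤ) (u v : Fin m → ℤ) :
    dmu (Fin.append x u) (Fin.append y v) = Fin.append (dmu x y) (dmu u v) := by
  funext i
  refine Fin.addCases (fun i => ?_) (fun i => ?_) i <;>
    simp [dmu, Fin.append_left, Fin.append_right]

/-- The projection `g(x) = inf{ f(x, y) : y ∈ ℤᵐ }` of a DDM-convex function
`f : ℤ^{n+m} → ℝ ∪ {+∞}` is DDM-convex, provided `g > -∞` everywhere. -/
theorem ddmConvex_projection {n m : ℕ} (f : (Fin (n + m) → ℤ) → EReal)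
    (hbot : ∀ z, f z ≠ ⊥) (hf : DDMConvexFn f)
    (hproper : ∀ x : Fin n → ℤ, (⨅ y : Fin m → ℤ, f (Fin.append x y)) ≠ ⊥) :
    DDMConvexFn (fun x : Fin n → ℤ => ⨅ y : Fin m → ℤ, f (Fin.append x y)) := by
  intro x y
  refine EReal.le_add_of_forall_gt (.inl (hproper x)) (.inr (hproper y)) fun a' ha' b' hb' => ?_
  obtain ⟨u, hu⟩ := iInf_lt_iff.1 ha'
  obtain ⟨v, hv⟩ := iInf_lt_iff.1 hb'
  calc (⨅ w : Fin m → ℤ, f (Fin.append (dmu x y) w)) +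
        (⨅ w : Fin m → ℤ, f (Fin.append (dmu y x) w))
      ≤ f (Fin.append (dmu x y) (dmu u v)) + f (Fin.append (dmu y x) (dmu v u)) :=
        add_le_add (iInf_le _ _) (iInf_le _ _)
    _ = f (dmu (Fin.append x u) (Fin.append y v)) + f (dmu (Fin.append y v) (Fin.append x u)) := by
        rw [dmu_append, dmu_append]
    _ ≤ f (Fin.append x u) + f (Fin.append y v) := hf _ _
    _ ≤ a' + b' := add_le_add hu.le hv.le
end

section
/- Let α be a positive integer, m = n(α − 1) + 1, and y ∈ ℤⁿ with ‖y‖_∞ = m. Define A_k = {i : y_i ≥ k} and B_k = {i : y_i ≤ −k} for k = 1,…,m (so A_1 ⊇ ⋯ ⊇ A_m, B_1 ⊇ ⋯ ⊇ B_m, A_1 ∩ B_1 = ∅ and A_m ∪ B_m ≠ ∅). Then there exists k₀ ∈ {1, …, m − α + 1} such that (A_{k₀}, B_{k₀}) = (A_{k₀+j}, B_{k₀+j}) for all j = 1, …, α − 1. -/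
open Finset

/-- For a positive integer `α`, `m = n(α-1)+1`, and `y ∈ ℤⁿ` with `‖y‖_∞ = m`,
letting `A_k = {i : yᵢ ≥ k}` and `B_k = {i : yᵢ ≤ -k}`, there exists
`k₀ ∈ {1, …, m-α+1}` with `(A_{k₀}, B_{k₀}) = (A_{k₀+j}, B_{k₀+j})` for all
`j = 1, …, α-1`. -/
theorem exists_constant_level_run {n : ℕ} (α : ℕ) (hα : 0 < α)
    (m : ℕ) (hm : m = n * (α - 1) + 1) (y : Fin n → ℤ) (hy : normInf y = m) :
    ∃ k₀ : ℕ, 1 ≤ k₀ ∧ k₀ ≤ m - α + 1 ∧ ∀ j ∈ Finset.Icc 1 (α - 1),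
      {i : Fin n | (k₀ : ℤ) ≤ y i} = {i : Fin n | ((k₀ + j : ℕ) : ℤ) ≤ y i} ∧
      {i : Fin n | y i ≤ -(k₀ : ℤ)} = {i : Fin n | y i ≤ -((k₀ + j : ℕ) : ℤ)} := by
  classical
  have hm1 : 1 ≤ m := by omega
  -- dispose of the trivial case α = 1
  by_cases hα1 : α = 1
  · refine ⟨1, le_refl 1, by omega, fun j hj => ?_⟩
    rw [Finset.mem_Icc] at hj
    omega
  have hα2 : 2 ≤ α := by omega
  -- n must be positive
  rcases Nat.eq_zero_or_pos n with hn | hn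
  · subst hn
    simp [normInf] at hy
    omega
  -- counting function
  set c : ℕ → ℕ := fun k => (Finset.univ.filter (fun i : Fin n => (k : ℤ) ≤ |y i|)).card
    with hcdef
  have hsub : ∀ k k' : ℕ, k ≤ k' →
      (Finset.univ.filter (fun i : Fin n => (k' : ℤ) ≤ |y i|)) ⊆
      (Finset.univ.filter (fun i : Fin n => (k : ℤ) ≤ |y i|)) := by
    intro k k' hkk' i hi
    simp only [Finset.mem_filter, Finset.mem_univ, true_and] at hi ⊢
    exact le_trans (by exact_mod_cast hkk') hi
  have hmono : ∀ k k', k ≤ k' → c k' ≤ c k := fun k k' h =>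
    Finset.card_le_card (hsub k k' h)
  have hc1 : c 1 ≤ n := by
    simpa [hcdef] using Finset.card_filter_le Finset.univ (fun i : Fin n => (1 : ℤ) ≤ |y i|)
  have hcm : 1 ≤ c m := by
    have hne : (Finset.univ : Finset (Fin n)).Nonempty := ⟨⟨0, hn⟩, Finset.mem_univ _⟩
    obtain ⟨i, -, hi⟩ := Finset.exists_mem_eq_sup Finset.univ hne
      (fun i : Fin n => (y i).natAbs)
    have him : (y i).natAbs = m := by rw [normInf] at hy; omega
    have : (m : ℤ) ≤ |y i| := by
      rw [Int.abs_eq_natAbs, him]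
    exact Finset.card_pos.mpr ⟨i, by simp [this]⟩
  by_contra hcon
  push_neg at hcon
  -- each admissible window forces a strict drop of c
  have hstep : ∀ k, 1 ≤ k → k ≤ m - α + 1 → c (k + (α - 1)) < c k := by
    intro k hk1 hk2
    obtain ⟨j, hj, hne⟩ := hcon k hk1 hk2
    rw [Finset.mem_Icc] at hj
    have hstrict : c (k + j) < c k := by
      by_contra hle
      push_neg at hle
      have heq : (Finset.univ.filter (fun i : Fin n => ((k + j : ℕ) : ℤ) ≤ |y i|)) =
          (Finset.univ.filter (fun i : Fin n => (k : ℤ) ≤ |y i|)) :=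
        Finset.eq_of_subset_of_card_le (hsub k (k + j) (by omega)) hle
      refine hne ?_ ?_
      · ext i
        simp only [Set.mem_setOf_eq]
        constructor
        · intro hi
          have hpos : (0 : ℤ) < y i := lt_of_lt_of_le (by exact_mod_cast hk1) hi
          have habs : (k : ℤ) ≤ |y i| := by rwa [abs_of_pos hpos]
          have : i ∈ Finset.univ.filter (fun i : Fin n => ((k + j : ℕ) : ℤ) ≤ |y i|) := by
            rw [heq]; simp [habs]
          simp only [Finset.mem_filter, Finset.mem_univ, true_and] at this
          rwa [abs_of_pos hpos] at this
        · intro hi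
          refine le_trans ?_ hi
          exact_mod_cast Nat.le_add_right k j
      · ext i
        simp only [Set.mem_setOf_eq]
        constructor
        · intro hi
          have hneg : y i < 0 := lt_of_le_of_lt hi (by
            have : (1 : ℤ) ≤ (k : ℤ) := by exact_mod_cast hk1
            omega)
          have habs : (k : ℤ) ≤ |y i| := by rw [abs_of_neg hneg]; omega
          have : i ∈ Finset.univ.filter (fun i : Fin n => ((k + j : ℕ) : ℤ) ≤ |y i|) := by
            rw [heq]; simp [habs]
          simp only [Finset.mem_filter, Finset.mem_univ, true_and] at this
          rw [abs_of_neg hneg] at this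
          omega
        · intro hi
          refine le_trans hi ?_
          have : (k : ℤ) ≤ ((k + j : ℕ) : ℤ) := by exact_mod_cast Nat.le_add_right k j
          omega
    exact lt_of_le_of_lt (hmono (k + j) (k + (α - 1)) (by omega)) hstrict
  -- descent: c (1 + t*(α-1)) + t ≤ c 1
  have hdesc : ∀ t, t ≤ n → c (1 + t * (α - 1)) + t ≤ c 1 := by
    intro t
    induction t with
    | zero => intro _; simp
    | succ s ih =>
      intro hs
      have hkbound : 1 + s * (α - 1) ≤ m - α + 1 := by
        have : s * (α - 1) + (α - 1) ≤ n * (α - 1) :=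
          by calc s * (α - 1) + (α - 1) = (s + 1) * (α - 1) := by ring
            _ ≤ n * (α - 1) := Nat.mul_le_mul_right _ hs
        omega
      have h1 := hstep (1 + s * (α - 1)) (by omega) hkbound
      have h2 := ih (by omega)
      have harr : 1 + (s + 1) * (α - 1) = (1 + s * (α - 1)) + (α - 1) := by ring
      rw [harr]
      omega
  have := hdesc n le_rfl
  have hmm : 1 + n * (α - 1) = m := by omega
  rw [hmm] at this
  omega
end
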